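/- arXiv:2108.07311 — 5 statements merged into one kernel-verified Lean document; each statement's English description precedes it below -/
import Mathlib

section
/- If K ⊆ ℝ² is a Borel set with dim_H(K) = 0, then K is flat (not curved). -/
/-!
If `μ` witnesses that `K` is curved, then any three points of a set `s` of diameter `D`
span a triangle of area at most `D²`, so `μ(s)³ = μ³(s³) ≤ C D^{2β}`. Hence
`μ(s) ≤ C^{1/3} (diam s)^{2β/3}`, and by the mass distribution principle the probability
measure `μ` vanishes on every set of Hausdorff dimension `< 2β/3`, which `K` is not.
-/

open MeasureTheory
open scoped ENNReal NNReal

/-- The area of the triangle spanned by three points of `ℝ²`. -/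
noncomputable def triArea (p₁ p₂ p₃ : ℝ × ℝ) : ℝ :=
  |(p₂.1 - p₁.1) * (p₃.2 - p₁.2) - (p₂.2 - p₁.2) * (p₃.1 - p₁.1)| / 2

/-- A set `K ⊆ ℝ²` is *curved* if there exist `β > 0`, `C > 0` and a Borel probability
measure `μ` supported on `K` such that for all `r > 0`,
`μ³({(p₁,p₂,p₃) ∈ K³ : |T(p₁,p₂,p₃)| < r}) ≤ C r^β`. -/
def IsCurved (K : Set (ℝ × ℝ)) : Prop :=
  ∃ (β C : ℝ) (μ : Measure (ℝ × ℝ)), 0 < β ∧ 0 < C ∧ IsProbabilityMeasure μ ∧ μ Kᶜ = 0 ∧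
    ∀ r : ℝ, 0 < r →
      (μ.prod (μ.prod μ))
          {q : (ℝ × ℝ) × (ℝ × ℝ) × (ℝ × ℝ) |
            q.1 ∈ K ∧ q.2.1 ∈ K ∧ q.2.2 ∈ K ∧ triArea q.1 q.2.1 q.2.2 < r}
        ≤ ENNReal.ofReal (C * r ^ β)

theorem triArea_le_sq {p₁ p₂ p₃ : ℝ × ℝ} {D : ℝ} (h₂ : dist p₂ p₁ ≤ D) (h₃ : dist p₃ p₁ ≤ D) :
    triArea p₁ p₂ p₃ ≤ D ^ 2 := by
  rw [Prod.dist_eq, max_le_iff, Real.dist_eq, Real.dist_eq] at h₂ h₃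
  obtain ⟨ha, hb⟩ := h₂
  obtain ⟨hc, hd⟩ := h₃
  have hcross : |(p₂.1 - p₁.1) * (p₃.2 - p₁.2) - (p₂.2 - p₁.2) * (p₃.1 - p₁.1)| ≤ 2 * D ^ 2 :=
    calc _ ≤ |p₂.1 - p₁.1| * |p₃.2 - p₁.2| + |p₂.2 - p₁.2| * |p₃.1 - p₁.1| := by
          rw [← abs_mul, ← abs_mul]; exact abs_sub _ _
      _ ≤ D * D + D * D := by gcongr <;> exact (abs_nonneg _).trans ‹_›
      _ = 2 * D ^ 2 := by ring
  rw [triArea]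
  linarith

/-- Mass distribution principle. -/
theorem measure_eq_zero_of_dimH_lt {X : Type*} [EMetricSpace X] [MeasurableSpace X]
    [BorelSpace X] {μ : Measure X} {c ε : ℝ≥0∞} {d : ℝ≥0} (hc₀ : c ≠ 0) (hc : c ≠ ∞)
    (hε : 0 < ε) (h : ∀ s, Metric.ediam s ≤ ε → μ s ≤ c * Metric.ediam s ^ (d : ℝ))
    {K : Set X} (hK : dimH K < d) : μ K = 0 := by
  have hle : c⁻¹ • μ ≤ μH[d] := Measure.le_hausdorffMeasure _ _ ε hε fun s hs => by
    rw [Measure.smul_apply, smul_eq_mul, ENNReal.inv_mul_le_iff hc₀ hc]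
    exact h s hs
  simpa [hc] using (hle K).trans_eq (hausdorffMeasure_of_dimH_lt hK)

def HasTriangleAreaBound (K : Set (ℝ × ℝ)) (μ : Measure (ℝ × ℝ)) (β C : ℝ) : Prop :=
  ∀ r : ℝ, 0 < r →
    (μ.prod (μ.prod μ))
        {q : (ℝ × ℝ) × (ℝ × ℝ) × (ℝ × ℝ) |
          q.1 ∈ K ∧ q.2.1 ∈ K ∧ q.2.2 ∈ K ∧ triArea q.1 q.2.1 q.2.2 < r}
      ≤ ENNReal.ofReal (C * r ^ β)

namespace HasTriangleAreaBound

variable {K : Set (ℝ × ℝ)} {μ : Measure (ℝ × ℝ)} {β C : ℝ} [SFinite μ]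

theorem measure_pow_three_le (hb : HasTriangleAreaBound K μ β C) (hβ : 0 ≤ β)
    (hμK : μ Kᶜ = 0) {s : Set (ℝ × ℝ)} {D : ℝ} (hs : ∀ p ∈ s, ∀ q ∈ s, dist p q ≤ D) :
    μ s ^ 3 ≤ ENNReal.ofReal (C * (D ^ 2) ^ β) := by
  have hcont : ContinuousAt (fun r : ℝ => ENNReal.ofReal (C * r ^ β)) (D ^ 2) :=
    ENNReal.continuous_ofReal.continuousAt.comp
      (continuousAt_const.mul (Real.continuousAt_rpow_const _ _ (Or.inr hβ)))
  refine ge_of_tendsto (hcont.tendsto.mono_left nhdsWithin_le_nhds)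
    (eventually_nhdsWithin_of_forall (s := Set.Ioi (D ^ 2)) fun r hr => ?_)
  have hsub : (s ∩ K) ×ˢ (s ∩ K) ×ˢ (s ∩ K) ⊆
      {q : (ℝ × ℝ) × (ℝ × ℝ) × (ℝ × ℝ) |
        q.1 ∈ K ∧ q.2.1 ∈ K ∧ q.2.2 ∈ K ∧ triArea q.1 q.2.1 q.2.2 < r} := by
    rintro ⟨p₁, p₂, p₃⟩ ⟨⟨h₁, hK₁⟩, ⟨h₂, hK₂⟩, ⟨h₃, hK₃⟩⟩
    exact ⟨hK₁, hK₂, hK₃, (triArea_le_sq (hs _ h₂ _ h₁) (hs _ h₃ _ h₁)).trans_lt hr⟩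
  calc μ s ^ 3 = μ.prod (μ.prod μ) ((s ∩ K) ×ˢ (s ∩ K) ×ˢ (s ∩ K)) := by
        rw [Measure.prod_prod, Measure.prod_prod, measure_inter_conull hμK]; ring
    _ ≤ ENNReal.ofReal (C * r ^ β) :=
        (measure_mono hsub).trans (hb r ((sq_nonneg D).trans_lt hr))

theorem measure_le_ediam_rpow (hb : HasTriangleAreaBound K μ β C) (hβ : 0 ≤ β)
    (hμK : μ Kᶜ = 0) {s : Set (ℝ × ℝ)} (hs : Metric.ediam s ≠ ∞) :
    μ s ≤ ENNReal.ofReal C ^ (3⁻¹ : ℝ) * Metric.ediam s ^ (2 * β / 3) := by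
  have hcube := hb.measure_pow_three_le hβ hμK fun p hp q hq =>
    Metric.dist_le_diam_of_mem' hs hp hq
  have hdiam : ENNReal.ofReal (C * (Metric.diam s ^ 2) ^ β) =
      ENNReal.ofReal C * Metric.ediam s ^ (2 * β) := by
    rw [ENNReal.ofReal_mul' (by positivity), ← Real.rpow_natCast,
      ← Real.rpow_mul Metric.diam_nonneg,
      ← ENNReal.ofReal_rpow_of_nonneg Metric.diam_nonneg (by positivity), Metric.diam,
      ENNReal.ofReal_toReal hs]
    norm_num
  rw [hdiam, ← ENNReal.rpow_natCast, ← ENNReal.le_rpow_inv_iff (by norm_num)] at hcube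
  rw [ENNReal.mul_rpow_of_nonneg _ _ (by norm_num), ← ENNReal.rpow_mul] at hcube
  simpa [div_eq_mul_inv] using hcube

end HasTriangleAreaBound

theorem flat_of_dimH_eq_zero_general (K : Set (ℝ × ℝ)) (hdim : dimH K = 0) :
    ¬ IsCurved K := by
  rintro ⟨β, C, μ, hβ, hC, hμ, hμK, hb : HasTriangleAreaBound K μ β C⟩
  lift β to ℝ≥0 using hβ.le
  have hβ₀ : 0 < β := NNReal.coe_pos.1 hβ
  have hμK₀ : μ K = 0 := by
    refine measure_eq_zero_of_dimH_lt (c := ENNReal.ofReal C ^ (3⁻¹ : ℝ)) (d := 2 * β / 3)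
      (by simpa using hC) (ENNReal.rpow_ne_top_of_nonneg (by norm_num) ENNReal.ofReal_ne_top)
      one_pos (fun s hs => ?_) (hdim ▸ ENNReal.coe_pos.2 (by positivity))
    simpa using hb.measure_le_ediam_rpow β.2 hμK (hs.trans_lt ENNReal.one_lt_top).ne
  simpa [Set.union_compl_self] using measure_union_null hμK₀ hμK

/-- A Borel set `K ⊆ ℝ²` of Hausdorff dimension zero is flat (not curved). -/
theorem flat_of_dimH_eq_zero (K : Set (ℝ × ℝ)) (hK : MeasurableSet K) (hdim : dimH K = 0) :
    ¬ IsCurved K :=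
  flat_of_dimH_eq_zero_general K hdim
end

section
/- Let P be a smooth function on an open set U ⊆ ℝ² on which ∂ₓP and ∂ᵧP are nonzero and ∂ₓᵧP is nonzero. Then the following identity holds on U: (∂ₓP · ∂ᵧP)² · ∂ₓᵧ(log(∂ₓP / ∂ᵧP)) = (∂ᵧP)²(∂ₓP · ∂ₓₓᵧP − ∂ₓₓP · ∂ₓᵧP) − (∂ₓP)²(∂ᵧP · ∂ₓᵧᵧP − ∂ₓᵧP · ∂ᵧᵧP) = (∂ₓᵧP)² · (∇P ∧ ∇((∂ₓP · ∂ᵧP)/∂ₓᵧP)). -/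
/-- Partial derivative in the first variable of a function on `ℝ²`. -/
noncomputable def pdx (f : ℝ × ℝ → ℝ) : ℝ × ℝ → ℝ :=
  fun p => deriv (fun t => f (t, p.2)) p.1

/-- Partial derivative in the second variable of a function on `ℝ²`. -/
noncomputable def pdy (f : ℝ × ℝ → ℝ) : ℝ × ℝ → ℝ :=
  fun p => deriv (fun t => f (p.1, t)) p.2

section helpers
variable {U : Set (ℝ × ℝ)} {f : ℝ × ℝ → ℝ}

lemma hasDerivAt_slice_x {p : ℝ × ℝ} (hf : DifferentiableAt ℝ f p) :
    HasDerivAt (fun t => f (t, p.2)) (fderiv ℝ f p (1, 0)) p.1 := by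
  have h1 : HasDerivAt (fun t : ℝ => (t, p.2)) ((1:ℝ), (0:ℝ)) p.1 :=
    (hasDerivAt_id p.1).prodMk (hasDerivAt_const p.1 p.2)
  exact hf.hasFDerivAt.comp_hasDerivAt p.1 h1

lemma hasDerivAt_slice_y {p : ℝ × ℝ} (hf : DifferentiableAt ℝ f p) :
    HasDerivAt (fun t => f (p.1, t)) (fderiv ℝ f p (0, 1)) p.2 := by
  have h1 : HasDerivAt (fun t : ℝ => (p.1, t)) ((0:ℝ), (1:ℝ)) p.2 :=
    (hasDerivAt_const p.2 p.1).prodMk (hasDerivAt_id p.2)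
  exact hf.hasFDerivAt.comp_hasDerivAt p.2 h1

lemma pdx_eq_fderiv {p : ℝ × ℝ} (hf : DifferentiableAt ℝ f p) :
    pdx f p = fderiv ℝ f p (1, 0) := (hasDerivAt_slice_x hf).deriv

lemma pdy_eq_fderiv {p : ℝ × ℝ} (hf : DifferentiableAt ℝ f p) :
    pdy f p = fderiv ℝ f p (0, 1) := (hasDerivAt_slice_y hf).deriv

lemma pdx_hasDerivAt {p : ℝ × ℝ} (hf : DifferentiableAt ℝ f p) :
    HasDerivAt (fun t => f (t, p.2)) (pdx f p) p.1 := by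
  rw [pdx_eq_fderiv hf]; exact hasDerivAt_slice_x hf

lemma pdy_hasDerivAt {p : ℝ × ℝ} (hf : DifferentiableAt ℝ f p) :
    HasDerivAt (fun t => f (p.1, t)) (pdy f p) p.2 := by
  rw [pdy_eq_fderiv hf]; exact hasDerivAt_slice_y hf

lemma diffAt_of_contDiffOn (hU : IsOpen U) (hf : ContDiffOn ℝ (⊤ : ℕ∞) f U) {p : ℝ × ℝ}
    (hp : p ∈ U) : DifferentiableAt ℝ f p :=
  ((hf p hp).contDiffAt (hU.mem_nhds hp)).differentiableAt (by simp)

lemma pdx_contDiffOn (hU : IsOpen U) (hf : ContDiffOn ℝ (⊤ : ℕ∞) f U) :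
    ContDiffOn ℝ (⊤ : ℕ∞) (pdx f) U :=
  ((hf.fderiv_of_isOpen hU (le_of_eq rfl)).clm_apply contDiffOn_const).congr
    (fun _ hq => pdx_eq_fderiv (diffAt_of_contDiffOn hU hf hq))

lemma pdy_contDiffOn (hU : IsOpen U) (hf : ContDiffOn ℝ (⊤ : ℕ∞) f U) :
    ContDiffOn ℝ (⊤ : ℕ∞) (pdy f) U :=
  ((hf.fderiv_of_isOpen hU (le_of_eq rfl)).clm_apply contDiffOn_const).congr
    (fun _ hq => pdy_eq_fderiv (diffAt_of_contDiffOn hU hf hq))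

lemma pdx_congr (hU : IsOpen U) {p : ℝ × ℝ} (hp : p ∈ U)
    {g : ℝ × ℝ → ℝ} (h : ∀ q ∈ U, f q = g q) : pdx f p = pdx g p := by
  apply Filter.EventuallyEq.deriv_eq
  have hopen : IsOpen {t : ℝ | (t, p.2) ∈ U} :=
    hU.preimage (by fun_prop : Continuous fun t : ℝ => (t, p.2))
  filter_upwards [hopen.mem_nhds (by simpa using hp)] with t ht using h _ ht

lemma pdy_congr (hU : IsOpen U) {p : ℝ × ℝ} (hp : p ∈ U)
    {g : ℝ × ℝ → ℝ} (h : ∀ q ∈ U, f q = g q) : pdy f p = pdy g p := by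
  apply Filter.EventuallyEq.deriv_eq
  have hopen : IsOpen {t : ℝ | (p.1, t) ∈ U} :=
    hU.preimage (by fun_prop : Continuous fun t : ℝ => (p.1, t))
  filter_upwards [hopen.mem_nhds (by simpa using hp)] with t ht using h _ ht

lemma pd_symm (hU : IsOpen U) (hf : ContDiffOn ℝ (⊤ : ℕ∞) f U) {p : ℝ × ℝ} (hp : p ∈ U) :
    pdy (pdx f) p = pdx (pdy f) p := by
  set A := fun q => fderiv ℝ f q with hA
  have hAcd : ContDiffOn ℝ (⊤ : ℕ∞) A U := hf.fderiv_of_isOpen hU (le_of_eq rfl)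
  have hAd : DifferentiableAt ℝ A p :=
    ((hAcd p hp).contDiffAt (hU.mem_nhds hp)).differentiableAt (by simp)
  set B := fderiv ℝ A p with hB
  have hsymm : ∀ v w, B v w = B w v := by
    intro v w
    apply second_derivative_symmetric_of_eventually (f := f) (f' := A) (x := p)
    · filter_upwards [hU.mem_nhds hp] with q hq using
        (diffAt_of_contDiffOn hU hf hq).hasFDerivAt
    · exact hAd.hasFDerivAt
  have e1 : ∀ v : ℝ × ℝ, DifferentiableAt ℝ (fun q => A q v) p :=
    fun v => hAd.clm_apply (differentiableAt_const v)
  have f1 : ∀ v w : ℝ × ℝ, fderiv ℝ (fun q => A q v) p w = B w v := by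
    intro v w
    rw [fderiv_clm_apply hAd (differentiableAt_const v)]; simp; rfl
  have hx : pdy (pdx f) p = B (0,1) (1,0) := by
    rw [pdy_congr hU hp (g := fun q => A q (1,0))
      (fun q hq => pdx_eq_fderiv (diffAt_of_contDiffOn hU hf hq))]
    rw [pdy_eq_fderiv (e1 (1,0)), f1]
  have hy : pdx (pdy f) p = B (1,0) (0,1) := by
    rw [pdx_congr hU hp (g := fun q => A q (0,1))
      (fun q hq => pdy_eq_fderiv (diffAt_of_contDiffOn hU hf hq))]
    rw [pdx_eq_fderiv (e1 (0,1)), f1]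
  rw [hx, hy, hsymm]

end helpers

/-- For a smooth `P` on an open `U ⊆ ℝ²` with `∂ₓP`, `∂ᵧP`, `∂ₓᵧP` nonzero
on `U`, the identity
`(∂ₓP ∂ᵧP)² ∂ₓᵧ(log(∂ₓP/∂ᵧP))
  = (∂ᵧP)²(∂ₓP ∂ₓₓᵧP − ∂ₓₓP ∂ₓᵧP) − (∂ₓP)²(∂ᵧP ∂ₓᵧᵧP − ∂ₓᵧP ∂ᵧᵧP)
  = (∂ₓᵧP)² (∇P ∧ ∇(∂ₓP ∂ᵧP / ∂ₓᵧP))`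
holds on `U`.  (Here `Real.log` already satisfies `log (−x) = log x`.) -/
theorem blaschke_log_identity (U : Set (ℝ × ℝ)) (hU : IsOpen U) (P : ℝ × ℝ → ℝ)
    (hP : ContDiffOn ℝ (⊤ : ℕ∞) P U)
    (hx : ∀ p ∈ U, pdx P p ≠ 0) (hy : ∀ p ∈ U, pdy P p ≠ 0)
    (hxy : ∀ p ∈ U, pdx (pdy P) p ≠ 0) :
    ∀ p ∈ U,
      (pdx P p * pdy P p) ^ 2 *
          pdx (pdy (fun q => Real.log (pdx P q / pdy P q))) p
        = (pdy P p) ^ 2 * (pdx P p * pdx (pdx (pdy P)) p - pdx (pdx P) p * pdx (pdy P) p)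
            - (pdx P p) ^ 2 * (pdy P p * pdx (pdy (pdy P)) p - pdx (pdy P) p * pdy (pdy P) p)
      ∧
      (pdy P p) ^ 2 * (pdx P p * pdx (pdx (pdy P)) p - pdx (pdx P) p * pdx (pdy P) p)
          - (pdx P p) ^ 2 * (pdy P p * pdx (pdy (pdy P)) p - pdx (pdy P) p * pdy (pdy P) p)
        = (pdx (pdy P) p) ^ 2 *
            (pdx P p * pdy (fun q => pdx P q * pdy P q / pdx (pdy P) q) p
              - pdy P p * pdx (fun q => pdx P q * pdy P q / pdx (pdy P) q) p) := by
  -- abbreviations as plain functions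
  set a := pdx P with ha
  set b := pdy P with hb
  set c := pdx (pdy P) with hc
  set e := pdy (pdy P) with he
  have hacd : ContDiffOn ℝ (⊤ : ℕ∞) a U := pdx_contDiffOn hU hP
  have hbcd : ContDiffOn ℝ (⊤ : ℕ∞) b U := pdy_contDiffOn hU hP
  have hccd : ContDiffOn ℝ (⊤ : ℕ∞) c U := pdx_contDiffOn hU hbcd
  have hecd : ContDiffOn ℝ (⊤ : ℕ∞) e U := pdy_contDiffOn hU hbcd
  have hda : ∀ q ∈ U, DifferentiableAt ℝ a q := fun q hq => diffAt_of_contDiffOn hU hacd hq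
  have hdb : ∀ q ∈ U, DifferentiableAt ℝ b q := fun q hq => diffAt_of_contDiffOn hU hbcd hq
  have hdc : ∀ q ∈ U, DifferentiableAt ℝ c q := fun q hq => diffAt_of_contDiffOn hU hccd hq
  have hde : ∀ q ∈ U, DifferentiableAt ℝ e q := fun q hq => diffAt_of_contDiffOn hU hecd hq
  -- symmetry facts
  have s1 : ∀ q ∈ U, pdy a q = c q := fun q hq => pd_symm hU hP hq
  have s2 : ∀ q ∈ U, pdy c q = pdx e q := fun q hq => pd_symm hU hbcd hq
  intro p hp
  have hap := hx p hp; have hbp := hy p hp; have hcp := hxy p hp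
  -- Step 1: ∀ q ∈ U, pdy (log (a/b)) q = c q / a q - e q / b q
  have step1 : ∀ q ∈ U, pdy (fun q => Real.log (a q / b q)) q = c q / a q - e q / b q := by
    intro q hq
    have daq : HasDerivAt (fun t => a (q.1, t)) (pdy a q) q.2 := pdy_hasDerivAt (hda q hq)
    have dbq : HasDerivAt (fun t => b (q.1, t)) (pdy b q) q.2 := pdy_hasDerivAt (hdb q hq)
    have hbq : b (q.1, q.2) ≠ 0 := by simpa using hy q hq
    have habq : a (q.1, q.2) / b (q.1, q.2) ≠ 0 :=
      div_ne_zero (by simpa using hx q hq) hbq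
    have hdiv := (daq.div dbq hbq).log habq
    have := hdiv.deriv
    simp only [Pi.div_def] at this
    show deriv (fun t => Real.log (a (q.1, t) / b (q.1, t))) q.2 = _
    rw [this]
    have e1 : pdy a q = c q := s1 q hq
    have e2 : pdy b q = e q := rfl
    rw [e1, e2]
    simp only [Prod.mk.eta]
    have haq : a q ≠ 0 := hx q hq
    have hbq' : b q ≠ 0 := hy q hq
    field_simp
  -- Step 2 : first equality
  have dax : HasDerivAt (fun t => a (t, p.2)) (pdx a p) p.1 := pdx_hasDerivAt (hda p hp)
  have dbx : HasDerivAt (fun t => b (t, p.2)) (pdx b p) p.1 := pdx_hasDerivAt (hdb p hp)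
  have dcx : HasDerivAt (fun t => c (t, p.2)) (pdx c p) p.1 := pdx_hasDerivAt (hdc p hp)
  have dex : HasDerivAt (fun t => e (t, p.2)) (pdx e p) p.1 := pdx_hasDerivAt (hde p hp)
  have hap' : a (p.1, p.2) ≠ 0 := by simpa using hap
  have hbp' : b (p.1, p.2) ≠ 0 := by simpa using hbp
  have hcp' : c (p.1, p.2) ≠ 0 := by simpa using hcp
  constructor
  · have key : pdx (pdy (fun q => Real.log (a q / b q))) p
        = pdx (fun q => c q / a q - e q / b q) p := pdx_congr hU hp step1
    have hcomp := (dcx.div dax hap').sub (dex.div dbx hbp')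
    have hval := hcomp.deriv
    simp only [Pi.div_def, Pi.sub_def] at hval
    rw [key]
    show _ * deriv (fun t => c (t, p.2) / a (t, p.2) - e (t, p.2) / b (t, p.2)) p.1 = _
    rw [hval]
    simp only [Prod.mk.eta]
    -- pdx b p = c p definitionally
    have e3 : pdx b p = c p := rfl
    rw [e3]
    field_simp
  · -- second equality
    have day : HasDerivAt (fun t => a (p.1, t)) (pdy a p) p.2 := pdy_hasDerivAt (hda p hp)
    have dby : HasDerivAt (fun t => b (p.1, t)) (pdy b p) p.2 := pdy_hasDerivAt (hdb p hp)
    have dcy : HasDerivAt (fun t => c (p.1, t)) (pdy c p) p.2 := pdy_hasDerivAt (hdc p hp)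
    have hWx := (dax.mul dbx).div dcx hcp'
    have hWy := (day.mul dby).div dcy hcp'
    have hWxv := hWx.deriv
    have hWyv := hWy.deriv
    simp only [Pi.div_def, Pi.mul_def] at hWxv hWyv
    have gx : pdx (fun q => a q * b q / c q) p
        = (pdx a p * b p + a p * pdx b p) * c p / c p ^ 2
          - a p * b p * pdx c p / c p ^ 2 := by
      show deriv (fun t => a (t, p.2) * b (t, p.2) / c (t, p.2)) p.1 = _
      rw [hWxv]; simp only [Prod.mk.eta]; ring
    have gy : pdy (fun q => a q * b q / c q) p
        = (pdy a p * b p + a p * pdy b p) * c p / c p ^ 2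
          - a p * b p * pdy c p / c p ^ 2 := by
      show deriv (fun t => a (p.1, t) * b (p.1, t) / c (p.1, t)) p.2 = _
      rw [hWyv]; simp only [Prod.mk.eta]; ring
    rw [gx, gy, s1 p hp, s2 p hp]
    have e2 : pdy b p = e p := rfl
    have e3 : pdx b p = c p := rfl
    rw [e2, e3]
    field_simp
    ring
end

section
/- Let Q ⊆ [0,1]² be a square, c > 0, and let P : Q → ℝ be a smooth function with |∂ₓP| ≥ c and |∂ᵧP| ≥ c on Q. Let δ > 0 and let X ⊆ Q be a union of axis-parallel squares of side length δ. Then E_δ(P(X)) ≳ c · E_δ(X)² / E_δ({(x,y,x',y') ∈ X × X : P(x,y) = P(x',y')}), where the implied constant is absolute. -/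
open Set

/-- The `δ`-covering number of a set `S` in a pseudometric space: the minimal number of
balls of radius `δ` needed to cover `S` (junk value `0` if no finite cover exists). -/
noncomputable def covN {X : Type*} [PseudoMetricSpace X] (δ : ℝ) (S : Set X) : ℕ :=
  sInf {n : ℕ | ∃ t : Finset X, t.card = n ∧ S ⊆ ⋃ x ∈ t, Metric.ball x δ}

open Metric Bornology

variable {α : Type*} [PseudoMetricSpace α]

lemma covN_le {δ : ℝ} {S : Set α} (t : Finset α) (h : S ⊆ ⋃ x ∈ t, Metric.ball x δ) :
    covN δ S ≤ t.card :=
  Nat.sInf_le ⟨t, rfl, h⟩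

lemma covN_spec [ProperSpace α] {δ : ℝ} {S : Set α} (hδ : 0 < δ) (hS : IsBounded S) :
    ∃ t : Finset α, t.card = covN δ S ∧ S ⊆ ⋃ x ∈ t, Metric.ball x δ := by
  have htb : TotallyBounded S := hS.isCompact_closure.totallyBounded.subset subset_closure
  obtain ⟨u, hufin, hu⟩ := (Metric.totallyBounded_iff.mp htb) δ hδ
  have hne : {n : ℕ | ∃ t : Finset α, t.card = n ∧ S ⊆ ⋃ x ∈ t, Metric.ball x δ}.Nonempty := by
    refine ⟨hufin.toFinset.card, hufin.toFinset, rfl, ?_⟩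
    simpa [Set.Finite.mem_toFinset] using hu
  exact Nat.sInf_mem hne

lemma maxSep [DecidableEq α] {S : Set α} {r : ℝ} (hr : 0 < r) (B : ℕ)
    (hB : ∀ t : Finset α, ↑t ⊆ S → (∀ p ∈ t, ∀ q ∈ t, p ≠ q → r ≤ dist p q) → t.card ≤ B) :
    ∃ F : Finset α, ↑F ⊆ S ∧ (∀ p ∈ F, ∀ q ∈ F, p ≠ q → r ≤ dist p q) ∧
      ∀ y ∈ S, ∃ f ∈ F, dist y f < r := by
  set 𝒩 : Set ℕ := {n | ∃ t : Finset α, ↑t ⊆ S ∧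
    (∀ p ∈ t, ∀ q ∈ t, p ≠ q → r ≤ dist p q) ∧ t.card = n} with h𝒩
  have hne : 𝒩.Nonempty := ⟨0, ∅, by simp, by simp, rfl⟩
  have hbdd : BddAbove 𝒩 := ⟨B, fun n hn => by
    obtain ⟨t, h1, h2, h3⟩ := hn; exact h3 ▸ hB t h1 h2⟩
  obtain ⟨F, hFS, hFsep, hFcard⟩ := Nat.sSup_mem hne hbdd
  refine ⟨F, hFS, hFsep, fun y hy => ?_⟩
  by_contra hcon
  push_neg at hcon
  have hyF : y ∉ F := fun hyF => by
    have := hcon y hyF; simp at this; linarith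
  have hmem : F.card + 1 ∈ 𝒩 := by
    refine ⟨insert y F, ?_, ?_, by rw [Finset.card_insert_of_notMem hyF]⟩
    · intro p hp
      rcases Finset.mem_insert.mp (by exact_mod_cast hp) with h | h
      · exact h ▸ hy
      · exact hFS h
    · intro p hp q hq hpq
      rcases Finset.mem_insert.mp hp with rfl | hp'
      · rcases Finset.mem_insert.mp hq with rfl | hq'
        · exact absurd rfl hpq
        · exact hcon q hq'
      · rcases Finset.mem_insert.mp hq with rfl | hq'
        · rw [dist_comm]; exact hcon p hp'
        · exact hFsep p hp' q hq' hpq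
  have := le_csSup hbdd hmem
  omega

section OneD

lemma mid3_up {g : ℝ → ℝ} {c α β : ℝ} (hc : 0 < c) (hαβ : α ≤ β)
    (hcont : ContinuousOn g (Icc α β))
    (hslope : ∀ t₁ t₂, α ≤ t₁ → t₁ < t₂ → t₂ ≤ β → c * (t₂ - t₁) ≤ |g t₂ - g t₁|)
    {t : ℝ} (ht : t ∈ Icc α β) : g t ≤ max (g α) (g β) := by
  by_contra hcon
  push_neg at hcon
  have htα : α < t := by
    rcases eq_or_lt_of_le ht.1 with h | h
    · exfalso; rw [← h] at hcon; exact absurd (le_max_left _ _) (not_le.mpr hcon)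
    · exact h
  have htβ : t < β := by
    rcases eq_or_lt_of_le ht.2 with h | h
    · exfalso; rw [h] at hcon; exact absurd (le_max_right _ _) (not_le.mpr hcon)
    · exact h
  set w := (max (g α) (g β) + g t) / 2 with hw
  have hw1 : max (g α) (g β) < w := by rw [hw]; linarith
  have hw2 : w < g t := by rw [hw]; linarith
  have h1 : w ∈ Icc (g α) (g t) :=
    ⟨le_of_lt (lt_of_le_of_lt (le_max_left _ _) hw1), le_of_lt hw2⟩
  have h2 : w ∈ Icc (g β) (g t) :=
    ⟨le_of_lt (lt_of_le_of_lt (le_max_right _ _) hw1), le_of_lt hw2⟩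
  obtain ⟨ξ₁, hξ₁, hgξ₁⟩ := intermediate_value_Icc ht.1
    (hcont.mono (Icc_subset_Icc le_rfl ht.2)) h1
  obtain ⟨ξ₂, hξ₂, hgξ₂⟩ := intermediate_value_Icc' ht.2
    (hcont.mono (Icc_subset_Icc ht.1 le_rfl)) h2
  have hne : ξ₁ < ξ₂ := by
    rcases lt_or_eq_of_le (le_trans hξ₁.2 hξ₂.1) with h | h
    · exact h
    · exfalso
      have : ξ₁ = t := le_antisymm hξ₁.2 (h ▸ hξ₂.1)
      rw [this] at hgξ₁; linarith
  have := hslope ξ₁ ξ₂ hξ₁.1 hne hξ₂.2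
  rw [hgξ₂, hgξ₁] at this
  simp at this
  nlinarith

lemma mid3 {g : ℝ → ℝ} {c α β : ℝ} (hc : 0 < c) (hαβ : α ≤ β)
    (hcont : ContinuousOn g (Icc α β))
    (hslope : ∀ t₁ t₂, α ≤ t₁ → t₁ < t₂ → t₂ ≤ β → c * (t₂ - t₁) ≤ |g t₂ - g t₁|)
    {t : ℝ} (ht : t ∈ Icc α β) :
    min (g α) (g β) ≤ g t ∧ g t ≤ max (g α) (g β) := by
  refine ⟨?_, mid3_up hc hαβ hcont hslope ht⟩
  have := mid3_up (g := fun u => -g u) hc hαβ hcont.neg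
    (fun t₁ t₂ h1 h2 h3 => by
      simpa [abs_sub_comm, neg_sub, ← neg_add', abs_neg, neg_add_eq_sub]
        using hslope t₁ t₂ h1 h2 h3) ht
  rw [max_neg_neg] at this
  linarith

lemma midBump {g : ℝ → ℝ} {c α β : ℝ} (hc : 0 < c) (hαβ : α < β)
    (hcont : ContinuousOn g (Icc α β))
    (hslope : ∀ t₁ t₂, α ≤ t₁ → t₁ < t₂ → t₂ ≤ β → c * (t₂ - t₁) ≤ |g t₂ - g t₁|) :
    min (g α) (g β) ≤ g ((α + β) / 2) - c * (β - α) / 2 ∧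
    g ((α + β) / 2) + c * (β - α) / 2 ≤ max (g α) (g β) := by
  set m := (α + β) / 2 with hm
  have hmmem : m ∈ Icc α β := ⟨by rw [hm]; linarith, by rw [hm]; linarith⟩
  obtain ⟨hlow, hhigh⟩ := mid3 hc (le_of_lt hαβ) hcont hslope hmmem
  have hs1 : c * (m - α) ≤ |g m - g α| := hslope α m le_rfl (by rw [hm]; linarith) hmmem.2
  have hs2 : c * (β - m) ≤ |g β - g m| := hslope m β hmmem.1 (by rw [hm]; linarith) le_rfl
  have hmα : m - α = (β - α) / 2 := by rw [hm]; ring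
  have hβm : β - m = (β - α) / 2 := by rw [hm]; ring
  rcases le_total (g α) (g β) with h | h
  · have h1 : min (g α) (g β) = g α := min_eq_left h
    have h2 : max (g α) (g β) = max (g α) (g β) := rfl
    have hgαm : g α ≤ g m := le_trans (le_of_eq h1.symm) hlow
    have hgmβ : g m ≤ g β := le_trans hhigh (le_of_eq (max_eq_right h))
    rw [abs_of_nonneg (by linarith)] at hs1
    rw [abs_of_nonneg (by linarith)] at hs2
    constructor
    · rw [h1]; rw [hmα] at hs1; linarith
    · rw [max_eq_right h]; rw [hβm] at hs2; linarith
  · have hgβm : g β ≤ g m := le_trans (le_of_eq (min_eq_right h).symm) hlow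
    have hgmα : g m ≤ g α := le_trans hhigh (le_of_eq (max_eq_left h))
    rw [abs_of_nonpos (by linarith)] at hs1
    rw [abs_of_nonpos (by linarith)] at hs2
    constructor
    · rw [min_eq_right h]; rw [hβm] at hs2; linarith
    · rw [max_eq_left h]; rw [hmα] at hs1; linarith

end OneD

section Main

variable {a b s c : ℝ} {Q : Set (ℝ × ℝ)} {P : ℝ × ℝ → ℝ}

lemma slope_x (hQ : Q = Set.Icc a (a + s) ×ˢ Set.Icc b (b + s))
    (hP : ContDiffOn ℝ (⊤ : ℕ∞) P Q) (hpdx : ∀ p ∈ Q, c ≤ |pdx P p|)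
    {y x₁ x₂ : ℝ} (hy : y ∈ Icc b (b + s))
    (hx₁ : x₁ ∈ Icc a (a + s)) (hx₂ : x₂ ∈ Icc a (a + s)) (hlt : x₁ < x₂) :
    c * (x₂ - x₁) ≤ |P (x₂, y) - P (x₁, y)| := by
  set g : ℝ → ℝ := fun t => P (t, y) with hg
  have hmaps : ∀ u ∈ Icc a (a + s), (u, y) ∈ Q := by
    intro u hu; rw [hQ]; exact ⟨hu, hy⟩
  have hcont : ContinuousOn g (Icc x₁ x₂) := by
    apply (hP.continuousOn.comp (Continuous.continuousOn (by fun_prop)))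
    intro u hu
    exact hmaps u ⟨le_trans hx₁.1 hu.1, le_trans hu.2 hx₂.2⟩
  have hderiv : ∀ t ∈ Ioo x₁ x₂, HasDerivAt g (deriv g t) t := by
    intro t ht
    have htmem : t ∈ Icc a (a + s) := ⟨le_trans hx₁.1 (le_of_lt ht.1), le_trans (le_of_lt ht.2) hx₂.2⟩
    have hnhds : Icc a (a + s) ∈ nhds t :=
      Icc_mem_nhds (lt_of_le_of_lt hx₁.1 ht.1) (lt_of_lt_of_le ht.2 hx₂.2)
    have hdiff : DifferentiableWithinAt ℝ P Q (t, y) :=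
      hP.differentiableOn (by simp) _ (hmaps t htmem)
    have hι : DifferentiableWithinAt ℝ (fun u : ℝ => (u, y)) (Icc a (a + s)) t :=
      ((differentiable_id.prodMk (differentiable_const y)) t).differentiableWithinAt
    have hcomp : DifferentiableWithinAt ℝ g (Icc a (a + s)) t :=
      DifferentiableWithinAt.comp t hdiff hι (fun u hu => hmaps u hu)
    exact (hcomp.differentiableAt hnhds).hasDerivAt
  obtain ⟨ξ, hξ, hslope⟩ := exists_hasDerivAt_eq_slope g (deriv g) hlt hcont hderiv
  have hξQ : (ξ, y) ∈ Q := hmaps ξ ⟨le_trans hx₁.1 (le_of_lt hξ.1), le_trans (le_of_lt hξ.2) hx₂.2⟩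
  have hcle : c ≤ |deriv g ξ| := hpdx (ξ, y) hξQ
  rw [hslope, abs_div] at hcle
  rw [abs_of_pos (by linarith : (0:ℝ) < x₂ - x₁)] at hcle
  have h0 : (0:ℝ) < x₂ - x₁ := by linarith
  calc c * (x₂ - x₁) ≤ (|P (x₂, y) - P (x₁, y)| / (x₂ - x₁)) * (x₂ - x₁) := by
        apply mul_le_mul_of_nonneg_right hcle (le_of_lt h0)
    _ = |P (x₂, y) - P (x₁, y)| := by field_simp
  
lemma slope_y (hQ : Q = Set.Icc a (a + s) ×ˢ Set.Icc b (b + s))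
    (hP : ContDiffOn ℝ (⊤ : ℕ∞) P Q) (hpdy : ∀ p ∈ Q, c ≤ |pdy P p|)
    {x y₁ y₂ : ℝ} (hx : x ∈ Icc a (a + s))
    (hy₁ : y₁ ∈ Icc b (b + s)) (hy₂ : y₂ ∈ Icc b (b + s)) (hlt : y₁ < y₂) :
    c * (y₂ - y₁) ≤ |P (x, y₂) - P (x, y₁)| := by
  set g : ℝ → ℝ := fun t => P (x, t) with hg
  have hmaps : ∀ u ∈ Icc b (b + s), (x, u) ∈ Q := by
    intro u hu; rw [hQ]; exact ⟨hx, hu⟩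
  have hcont : ContinuousOn g (Icc y₁ y₂) := by
    apply (hP.continuousOn.comp (Continuous.continuousOn (by fun_prop)))
    intro u hu
    exact hmaps u ⟨le_trans hy₁.1 hu.1, le_trans hu.2 hy₂.2⟩
  have hderiv : ∀ t ∈ Ioo y₁ y₂, HasDerivAt g (deriv g t) t := by
    intro t ht
    have htmem : t ∈ Icc b (b + s) := ⟨le_trans hy₁.1 (le_of_lt ht.1), le_trans (le_of_lt ht.2) hy₂.2⟩
    have hnhds : Icc b (b + s) ∈ nhds t :=
      Icc_mem_nhds (lt_of_le_of_lt hy₁.1 ht.1) (lt_of_lt_of_le ht.2 hy₂.2)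
    have hdiff : DifferentiableWithinAt ℝ P Q (x, t) :=
      hP.differentiableOn (by simp) _ (hmaps t htmem)
    have hι : DifferentiableWithinAt ℝ (fun u : ℝ => (x, u)) (Icc b (b + s)) t :=
      ((differentiable_const x).prodMk differentiable_id t).differentiableWithinAt
    have hcomp : DifferentiableWithinAt ℝ g (Icc b (b + s)) t :=
      DifferentiableWithinAt.comp t hdiff hι (fun u hu => hmaps u hu)
    exact (hcomp.differentiableAt hnhds).hasDerivAt
  obtain ⟨ξ, hξ, hslope⟩ := exists_hasDerivAt_eq_slope g (deriv g) hlt hcont hderiv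
  have hξQ : (x, ξ) ∈ Q := hmaps ξ ⟨le_trans hy₁.1 (le_of_lt hξ.1), le_trans (le_of_lt hξ.2) hy₂.2⟩
  have hcle : c ≤ |deriv g ξ| := hpdy (x, ξ) hξQ
  rw [hslope, abs_div] at hcle
  rw [abs_of_pos (by linarith : (0:ℝ) < y₂ - y₁)] at hcle
  have h0 : (0:ℝ) < y₂ - y₁ := by linarith
  calc c * (y₂ - y₁) ≤ (|P (x, y₂) - P (x, y₁)| / (y₂ - y₁)) * (y₂ - y₁) := by
        apply mul_le_mul_of_nonneg_right hcle (le_of_lt h0)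
    _ = |P (x, y₂) - P (x, y₁)| := by field_simp


lemma reach (hQ : Q = Set.Icc a (a + s) ×ˢ Set.Icc b (b + s)) (hc : 0 < c)
    (hP : ContDiffOn ℝ (⊤ : ℕ∞) P Q) (hpdx : ∀ p ∈ Q, c ≤ |pdx P p|)
    (hpdy : ∀ p ∈ Q, c ≤ |pdy P p|) {u v δ : ℝ} (hδ : 0 < δ)
    (hsq : Icc u (u + δ) ×ˢ Icc v (v + δ) ⊆ Q) :
    Icc (P (u + δ / 2, v + δ / 2) - c * δ) (P (u + δ / 2, v + δ / 2) + c * δ) ⊆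
      P '' (Icc u (u + δ) ×ˢ Icc v (v + δ)) := by
  set sq := Icc u (u + δ) ×ˢ Icc v (v + δ) with hsqdef
  have hxsub : Icc u (u + δ) ⊆ Icc a (a + s) := by
    intro x hx
    have : (x, v) ∈ Q := hsq ⟨hx, ⟨le_rfl, by linarith⟩⟩
    rw [hQ] at this; exact this.1
  have hysub : Icc v (v + δ) ⊆ Icc b (b + s) := by
    intro y hy
    have : (u, y) ∈ Q := hsq ⟨⟨le_rfl, by linarith⟩, hy⟩
    rw [hQ] at this; exact this.2
  have hcontH : ∀ y ∈ Icc v (v + δ), ContinuousOn (fun t => P (t, y)) (Icc u (u + δ)) := by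
    intro y hy
    apply hP.continuousOn.comp (Continuous.continuousOn (by fun_prop))
    intro t ht; exact hsq ⟨ht, hy⟩
  have hcontV : ∀ x ∈ Icc u (u + δ), ContinuousOn (fun t => P (x, t)) (Icc v (v + δ)) := by
    intro x hx
    apply hP.continuousOn.comp (Continuous.continuousOn (by fun_prop))
    intro t ht; exact hsq ⟨hx, ht⟩
  have hslopeH : ∀ y ∈ Icc v (v + δ), ∀ t₁ t₂, u ≤ t₁ → t₁ < t₂ → t₂ ≤ u + δ →
      c * (t₂ - t₁) ≤ |P (t₂, y) - P (t₁, y)| := by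
    intro y hy t₁ t₂ h1 h2 h3
    exact slope_x hQ hP hpdx (hysub hy) (hxsub ⟨h1, by linarith⟩) (hxsub ⟨by linarith, h3⟩) h2
  have hslopeV : ∀ x ∈ Icc u (u + δ), ∀ t₁ t₂, v ≤ t₁ → t₁ < t₂ → t₂ ≤ v + δ →
      c * (t₂ - t₁) ≤ |P (x, t₂) - P (x, t₁)| := by
    intro x hx t₁ t₂ h1 h2 h3
    exact slope_y hQ hP hpdy (hxsub hx) (hysub ⟨h1, by linarith⟩) (hysub ⟨by linarith, h3⟩) h2
  set y₀ := v + δ / 2 with hy₀def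
  have hy₀ : y₀ ∈ Icc v (v + δ) := ⟨by rw [hy₀def]; linarith, by rw [hy₀def]; linarith⟩
  set B := P (u + δ / 2, v + δ / 2) with hBdef
  have hmidu : (u + (u + δ)) / 2 = u + δ / 2 := by ring
  have hmidv : (v + (v + δ)) / 2 = v + δ / 2 := by ring
  have hH := midBump (g := fun t => P (t, y₀)) (c := c) (α := u) (β := u + δ) hc
    (by linarith) (hcontH y₀ hy₀) (hslopeH y₀ hy₀)
  rw [hmidu] at hH
  have hlen : c * (u + δ - u) / 2 = c * δ / 2 := by ring
  rw [hlen] at hH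
  -- get xP with high value, xM with low value
  obtain ⟨xP, hxPmem, hxP⟩ : ∃ x, x ∈ Icc u (u + δ) ∧ B + c * δ / 2 ≤ P (x, y₀) := by
    rcases le_total (P (u, y₀)) (P (u + δ, y₀)) with h | h
    · exact ⟨u + δ, ⟨by linarith, le_rfl⟩, by rw [max_eq_right h] at hH; exact hH.2⟩
    · exact ⟨u, ⟨le_rfl, by linarith⟩, by rw [max_eq_left h] at hH; exact hH.2⟩
  obtain ⟨xM, hxMmem, hxM⟩ : ∃ x, x ∈ Icc u (u + δ) ∧ P (x, y₀) ≤ B - c * δ / 2 := by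
    rcases le_total (P (u, y₀)) (P (u + δ, y₀)) with h | h
    · exact ⟨u, ⟨le_rfl, by linarith⟩, by rw [min_eq_left h] at hH; exact hH.1⟩
    · exact ⟨u + δ, ⟨by linarith, le_rfl⟩, by rw [min_eq_right h] at hH; exact hH.1⟩
  have hVP := midBump (g := fun t => P (xP, t)) (c := c) (α := v) (β := v + δ) hc
    (by linarith) (hcontV xP hxPmem) (hslopeV xP hxPmem)
  rw [hmidv] at hVP
  have hlen2 : c * (v + δ - v) / 2 = c * δ / 2 := by ring
  rw [hlen2] at hVP
  obtain ⟨pP, hpPmem, hpP⟩ : ∃ p, p ∈ sq ∧ B + c * δ ≤ P p := by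
    rcases le_total (P (xP, v)) (P (xP, v + δ)) with h | h
    · refine ⟨(xP, v + δ), ⟨hxPmem, ⟨show v ≤ v + δ by linarith, le_rfl⟩⟩, ?_⟩
      rw [max_eq_right h] at hVP
      have := hVP.2
      simp only [hy₀def] at hxP ⊢
      linarith
    · refine ⟨(xP, v), ⟨hxPmem, ⟨le_rfl, show v ≤ v + δ by linarith⟩⟩, ?_⟩
      rw [max_eq_left h] at hVP
      have := hVP.2
      simp only [hy₀def] at hxP ⊢
      linarith
  have hVM := midBump (g := fun t => P (xM, t)) (c := c) (α := v) (β := v + δ) hc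
    (by linarith) (hcontV xM hxMmem) (hslopeV xM hxMmem)
  rw [hmidv] at hVM
  rw [hlen2] at hVM
  obtain ⟨pM, hpMmem, hpM⟩ : ∃ p, p ∈ sq ∧ P p ≤ B - c * δ := by
    rcases le_total (P (xM, v)) (P (xM, v + δ)) with h | h
    · refine ⟨(xM, v), ⟨hxMmem, ⟨le_rfl, show v ≤ v + δ by linarith⟩⟩, ?_⟩
      rw [min_eq_left h] at hVM
      have := hVM.1
      simp only [hy₀def] at hxM ⊢
      linarith
    · refine ⟨(xM, v + δ), ⟨hxMmem, ⟨show v ≤ v + δ by linarith, le_rfl⟩⟩, ?_⟩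
      rw [min_eq_right h] at hVM
      have := hVM.1
      simp only [hy₀def] at hxM ⊢
      linarith
  have hpre : IsPreconnected sq := ((convex_Icc u (u + δ)).prod (convex_Icc v (v + δ))).isPreconnected
  have hIVT := hpre.intermediate_value hpMmem hpPmem (hP.continuousOn.mono hsq)
  exact subset_trans (Icc_subset_Icc hpM hpP) hIVT

end Main

section Counting

lemma floor_eq_dist_lt {r x y : ℝ} (hr : 0 < r) (h : ⌊x / r⌋ = ⌊y / r⌋) : |x - y| < r := by
  have h1 : (⌊x / r⌋ : ℝ) ≤ x / r := Int.floor_le _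
  have h2 : x / r < ⌊x / r⌋ + 1 := Int.lt_floor_add_one _
  have h3 : (⌊y / r⌋ : ℝ) ≤ y / r := Int.floor_le _
  have h4 : y / r < ⌊y / r⌋ + 1 := Int.lt_floor_add_one _
  rw [h] at h1 h2
  have hx1 : (⌊y / r⌋ : ℝ) * r ≤ x := (le_div_iff₀ hr).mp h1
  have hx2 : x < (⌊y / r⌋ + 1) * r := (div_lt_iff₀ hr).mp h2
  have hy1 : (⌊y / r⌋ : ℝ) * r ≤ y := (le_div_iff₀ hr).mp h3
  have hy2 : y < (⌊y / r⌋ + 1) * r := (div_lt_iff₀ hr).mp h4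
  rw [abs_lt]
  constructor <;> nlinarith

lemma sep_bound_square {r : ℝ} (hr : 0 < r) :
    ∃ B : ℕ, ∀ t : Finset (ℝ × ℝ), ↑t ⊆ Icc (0:ℝ) 1 ×ˢ Icc (0:ℝ) 1 →
      (∀ p ∈ t, ∀ q ∈ t, p ≠ q → r ≤ dist p q) → t.card ≤ B := by
  refine ⟨((Finset.Icc (0:ℤ) ⌊1/r⌋) ×ˢ (Finset.Icc (0:ℤ) ⌊1/r⌋)).card, fun t ht hsep => ?_⟩
  have hinj : Set.InjOn (fun p : ℝ × ℝ => (⌊p.1 / r⌋, ⌊p.2 / r⌋)) ↑t := by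
    intro p hp q hq hpq
    by_contra hne
    have h1 : |p.1 - q.1| < r := floor_eq_dist_lt hr (congrArg Prod.fst hpq)
    have h2 : |p.2 - q.2| < r := floor_eq_dist_lt hr (congrArg Prod.snd hpq)
    have := hsep p hp q hq hne
    rw [Prod.dist_eq, Real.dist_eq, Real.dist_eq] at this
    rcases max_cases |p.1 - q.1| |p.2 - q.2| with ⟨he, _⟩ | ⟨he, _⟩ <;> rw [he] at this <;> linarith
  calc t.card = (t.image (fun p : ℝ × ℝ => (⌊p.1 / r⌋, ⌊p.2 / r⌋))).card :=
        (Finset.card_image_of_injOn hinj).symm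
    _ ≤ ((Finset.Icc (0:ℤ) ⌊1/r⌋) ×ˢ (Finset.Icc (0:ℤ) ⌊1/r⌋)).card := by
        apply Finset.card_le_card
        intro z hz
        obtain ⟨p, hp, hpz⟩ := Finset.mem_image.mp hz
        have hpmem := ht hp
        rw [Set.mem_prod] at hpmem
        rw [Finset.mem_product, ← hpz]
        constructor <;> rw [Finset.mem_Icc] <;> constructor
        · exact Int.floor_nonneg.mpr (div_nonneg hpmem.1.1 (le_of_lt hr))
        · exact Int.floor_le_floor (by gcongr; exact hpmem.1.2)
        · exact Int.floor_nonneg.mpr (div_nonneg hpmem.2.1 (le_of_lt hr))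
        · exact Int.floor_le_floor (by gcongr; exact hpmem.2.2)

lemma sep_interval_card {r l L : ℝ} (hr : 0 < r) (hL : 0 ≤ L) (t : Finset ℝ)
    (ht : ↑t ⊆ Icc l (l + L)) (hsep : ∀ p ∈ t, ∀ q ∈ t, p ≠ q → r ≤ dist p q) :
    t.card ≤ ⌊L / r⌋.toNat + 1 := by
  have hinj : Set.InjOn (fun x : ℝ => ⌊(x - l) / r⌋) ↑t := by
    intro p hp q hq hpq
    by_contra hne
    have h1 : |(p - l) - (q - l)| < r := floor_eq_dist_lt hr hpq
    have h2 := hsep p hp q hq hne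
    rw [Real.dist_eq] at h2
    have h3 : |p - q| < r := by rw [show p - q = (p - l) - (q - l) by ring]; exact h1
    linarith
  calc t.card = (t.image (fun x : ℝ => ⌊(x - l) / r⌋)).card :=
        (Finset.card_image_of_injOn hinj).symm
    _ ≤ (Finset.Icc (0:ℤ) ⌊L / r⌋).card := by
        apply Finset.card_le_card
        intro z hz
        obtain ⟨p, hp, hpz⟩ := Finset.mem_image.mp hz
        have hpmem := ht hp
        rw [Finset.mem_Icc, ← hpz]
        constructor
        · exact Int.floor_nonneg.mpr (div_nonneg (by linarith [hpmem.1]) (le_of_lt hr))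
        · exact Int.floor_le_floor (by gcongr; linarith [hpmem.2])
    _ = ⌊L / r⌋.toNat + 1 := by
        rw [Int.card_Icc]
        have h0 : (0:ℤ) ≤ ⌊L / r⌋ := Int.floor_nonneg.mpr (div_nonneg hL (le_of_lt hr))
        omega

lemma grid_cover {δ : ℝ} (hδ : 0 < δ) (f : ℝ × ℝ) :
    ∃ t : Finset (ℝ × ℝ), t.card ≤ 225 ∧
      ∀ x : ℝ × ℝ, dist x f ≤ 13 * δ / 2 → x ∈ ⋃ g ∈ t, Metric.ball g δ := by
  refine ⟨((Finset.Icc (-7:ℤ) 7) ×ˢ (Finset.Icc (-7:ℤ) 7)).image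
    (fun ij => (f.1 + ij.1 * δ, f.2 + ij.2 * δ)), ?_, ?_⟩
  · calc _ ≤ ((Finset.Icc (-7:ℤ) 7) ×ˢ (Finset.Icc (-7:ℤ) 7)).card := Finset.card_image_le
      _ = 225 := by rw [Finset.card_product, Int.card_Icc]; rfl
  · intro x hx
    have hx1 : |x.1 - f.1| ≤ 13 * δ / 2 := by
      have := le_max_left (dist x.1 f.1) (dist x.2 f.2)
      rw [← Prod.dist_eq] at this
      rw [← Real.dist_eq]; linarith
    have hx2 : |x.2 - f.2| ≤ 13 * δ / 2 := by
      have := le_max_right (dist x.1 f.1) (dist x.2 f.2)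
      rw [← Prod.dist_eq] at this
      rw [← Real.dist_eq]; linarith
    set i := ⌊(x.1 - f.1) / δ⌋ with hi
    set j := ⌊(x.2 - f.2) / δ⌋ with hj
    have hrange : ∀ u : ℝ, |u| ≤ 13 * δ / 2 → -7 ≤ ⌊u / δ⌋ ∧ ⌊u / δ⌋ ≤ 7 := by
      intro u hu
      rw [abs_le] at hu
      constructor
      · apply Int.le_floor.mpr
        push_cast
        rw [le_div_iff₀ hδ]; linarith
      · have h1 : (⌊u / δ⌋ : ℝ) ≤ u / δ := Int.floor_le _
        have h2 : u / δ ≤ 13 / 2 := by rw [div_le_iff₀ hδ]; linarith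
        exact_mod_cast le_trans h1 (by linarith : u / δ ≤ (7:ℝ))
    have hij : (i, j) ∈ (Finset.Icc (-7:ℤ) 7) ×ˢ (Finset.Icc (-7:ℤ) 7) := by
      rw [Finset.mem_product, Finset.mem_Icc, Finset.mem_Icc]
      exact ⟨⟨(hrange _ hx1).1, (hrange _ hx1).2⟩, ⟨(hrange _ hx2).1, (hrange _ hx2).2⟩⟩
    rw [Set.mem_iUnion₂]
    refine ⟨(f.1 + i * δ, f.2 + j * δ), Finset.mem_image.mpr ⟨(i, j), hij, rfl⟩, ?_⟩
    rw [Metric.mem_ball, Prod.dist_eq]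
    have hfl : ∀ u : ℝ, dist u (⌊u / δ⌋ * δ) < δ := by
      intro u
      have h1 : (⌊u / δ⌋ : ℝ) ≤ u / δ := Int.floor_le _
      have h2 : u / δ < ⌊u / δ⌋ + 1 := Int.lt_floor_add_one _
      have h1' : (⌊u / δ⌋ : ℝ) * δ ≤ u := (le_div_iff₀ hδ).mp h1
      have h2' : u < ((⌊u / δ⌋ : ℝ) + 1) * δ := (div_lt_iff₀ hδ).mp h2
      rw [Real.dist_eq, abs_lt]
      constructor <;> nlinarith
    apply max_lt
    · have := hfl (x.1 - f.1)
      rw [Real.dist_eq] at this ⊢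
      rw [← hi] at this
      convert this using 2
      · rfl
      · ring
    · have := hfl (x.2 - f.2)
      rw [Real.dist_eq] at this ⊢
      rw [← hj] at this
      convert this using 2
      · rfl
      · ring

end Counting


set_option maxHeartbeats 2000000 in
/-- Cauchy–Schwarz / energy lemma: there is an absolute constant `C > 0`
such that for every square `Q ⊆ [0,1]²`, every `c > 0`, every smooth `P : Q → ℝ` with
`|∂ₓP| ≥ c` and `|∂ᵧP| ≥ c` on `Q`, and every union `X ⊆ Q` of axis-parallel `δ`-squares,
`E_δ(P(X)) ≥ C · c · E_δ(X)² / E_δ({(x,y,x',y') ∈ X × X : P(x,y) = P(x',y')})`. -/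
theorem covering_growth_of_energy_dispersion :
    ∃ C : ℝ, 0 < C ∧
      ∀ (a b s : ℝ), 0 < s →
      ∀ Q : Set (ℝ × ℝ), Q = Set.Icc a (a + s) ×ˢ Set.Icc b (b + s) →
        Q ⊆ Set.Icc (0 : ℝ) 1 ×ˢ Set.Icc (0 : ℝ) 1 →
      ∀ c : ℝ, 0 < c →
      ∀ P : ℝ × ℝ → ℝ, ContDiffOn ℝ (⊤ : ℕ∞) P Q →
        (∀ p ∈ Q, c ≤ |pdx P p|) → (∀ p ∈ Q, c ≤ |pdy P p|) →
      ∀ δ : ℝ, 0 < δ →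
      ∀ X : Set (ℝ × ℝ), X ⊆ Q →
        (∃ T : Set (ℝ × ℝ),
            X = ⋃ z ∈ T, Set.Icc z.1 (z.1 + δ) ×ˢ Set.Icc z.2 (z.2 + δ)) →
        C * c * (covN δ X : ℝ) ^ 2 /
            (covN δ {q : (ℝ × ℝ) × (ℝ × ℝ) | q.1 ∈ X ∧ q.2 ∈ X ∧ P q.1 = P q.2} : ℝ)
          ≤ (covN δ (P '' X) : ℝ) := by
  classical
  refine ⟨1 / 860625, by norm_num, ?_⟩
  intro a b s hs Q hQ hQsub c hc P hP hpdx hpdy δ hδ X hXQ hXT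
  obtain ⟨T, hT⟩ := hXT
  set Z := {q : (ℝ × ℝ) × (ℝ × ℝ) | q.1 ∈ X ∧ q.2 ∈ X ∧ P q.1 = P q.2} with hZ
  have hcδ : 0 < c * δ := mul_pos hc hδ
  -- trivial case : X empty
  by_cases hXne : X = ∅
  · have hN : covN δ X = 0 := by
      have h := covN_le (δ := δ) (S := X) ∅ (by rw [hXne]; simp)
      simpa using h
    rw [hN]
    simp
  -- bounded sets
  have hQbd : Bornology.IsBounded Q := by
    rw [hQ]; exact (Metric.isBounded_Icc _ _).prod (Metric.isBounded_Icc _ _)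
  have hXbd : Bornology.IsBounded X := hQbd.subset hXQ
  have hZbd : Bornology.IsBounded Z := by
    apply (hQbd.prod hQbd).subset
    intro q hq
    exact ⟨hXQ hq.1, hXQ hq.2.1⟩
  have hQcomp : IsCompact Q := by rw [hQ]; exact isCompact_Icc.prod isCompact_Icc
  have hPXbd : Bornology.IsBounded (P '' X) := by
    apply (hQcomp.image_of_continuousOn hP.continuousOn).isBounded.subset
    exact image_mono hXQ
  obtain ⟨tZ, htZcard, htZcov⟩ := covN_spec hδ hZbd
  obtain ⟨tM, htMcard, htMcov⟩ := covN_spec hδ hPXbd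
  -- squares
  have hsqX : ∀ z ∈ T, Icc z.1 (z.1 + δ) ×ˢ Icc z.2 (z.2 + δ) ⊆ X := by
    intro z hz
    rw [hT]
    exact Set.subset_biUnion_of_mem (u := fun z => Icc z.1 (z.1 + δ) ×ˢ Icc z.2 (z.2 + δ)) hz
  set μ : ℝ × ℝ → ℝ × ℝ := fun z => (z.1 + δ / 2, z.2 + δ / 2) with hμ
  set Y : Set (ℝ × ℝ) := μ '' T with hY
  have hreach : ∀ z ∈ T, Icc (P (μ z) - c * δ) (P (μ z) + c * δ) ⊆
      P '' (Icc z.1 (z.1 + δ) ×ˢ Icc z.2 (z.2 + δ)) := by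
    intro z hz
    exact reach hQ hc hP hpdx hpdy hδ (subset_trans (hsqX z hz) hXQ)
  have hcdist : ∀ z : ℝ × ℝ, ∀ p ∈ Icc z.1 (z.1 + δ) ×ˢ Icc z.2 (z.2 + δ),
      dist p (μ z) ≤ δ / 2 := by
    intro z p hp
    rw [Prod.dist_eq]
    apply max_le
    · rw [Real.dist_eq, abs_le]
      constructor
      · show -(δ/2) ≤ p.1 - (z.1 + δ/2); linarith [hp.1.1]
      · show p.1 - (z.1 + δ/2) ≤ δ/2; linarith [hp.1.2]
    · rw [Real.dist_eq, abs_le]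
      constructor
      · show -(δ/2) ≤ p.2 - (z.2 + δ/2); linarith [hp.2.1]
      · show p.2 - (z.2 + δ/2) ≤ δ/2; linarith [hp.2.2]
  have hμmem : ∀ z : ℝ × ℝ, μ z ∈ Icc z.1 (z.1 + δ) ×ˢ Icc z.2 (z.2 + δ) := by
    intro z
    constructor
    · constructor
      · show z.1 ≤ z.1 + δ/2; linarith
      · show z.1 + δ/2 ≤ z.1 + δ; linarith
    · constructor
      · show z.2 ≤ z.2 + δ/2; linarith
      · show z.2 + δ/2 ≤ z.2 + δ; linarith
  have hYsub : Y ⊆ Icc (0:ℝ) 1 ×ˢ Icc (0:ℝ) 1 := by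
    rintro m ⟨z, hz, rfl⟩
    exact hQsub (hXQ (hsqX z hz (hμmem z)))
  -- maximal separated subset F of Y
  obtain ⟨B, hB⟩ := sep_bound_square (r := 6 * δ) (by linarith)
  obtain ⟨F, hFY, hFsep, hFcov⟩ := maxSep (S := Y) (r := 6 * δ) (by linarith) B
    (fun t ht hsep => hB t (subset_trans ht hYsub) hsep)
  -- covering number of X bounded by 225 * F.card
  choose gr hgr1 hgr2 using fun f : ℝ × ℝ => grid_cover hδ f
  have hNle : covN δ X ≤ 225 * F.card := by
    have hcov : X ⊆ ⋃ x ∈ F.biUnion gr, Metric.ball x δ := by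
      intro x hx
      rw [hT] at hx
      rw [mem_iUnion₂] at hx
      obtain ⟨z, hz, hxz⟩ := hx
      obtain ⟨f, hf, hdf⟩ := hFcov (μ z) ⟨z, hz, rfl⟩
      have hdxf : dist x f ≤ 13 * δ / 2 := by
        calc dist x f ≤ dist x (μ z) + dist (μ z) f := dist_triangle _ _ _
          _ ≤ δ / 2 + 6 * δ := add_le_add (hcdist z x hxz) (le_of_lt hdf)
          _ ≤ 13 * δ / 2 := by linarith
      have := hgr2 f x hdxf
      rw [mem_iUnion₂] at this ⊢
      obtain ⟨g, hg, hxg⟩ := this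
      exact ⟨g, Finset.mem_biUnion.mpr ⟨f, hf, hg⟩, hxg⟩
    calc covN δ X ≤ (F.biUnion gr).card := covN_le _ hcov
      _ ≤ ∑ f ∈ F, (gr f).card := Finset.card_biUnion_le
      _ ≤ ∑ _f ∈ F, 225 := Finset.sum_le_sum (fun f _ => hgr1 f)
      _ = 225 * F.card := by rw [Finset.sum_const]; ring
  -- values
  have hSVfin : (P '' (↑F : Set (ℝ × ℝ))).Finite := F.finite_toSet.image P
  obtain ⟨V, hVS, hVsep, hVcov⟩ := maxSep (S := P '' (↑F : Set (ℝ × ℝ))) (r := c * δ / 2)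
    (by linarith) hSVfin.toFinset.card
    (fun t ht _ => Finset.card_le_card (fun x hx => hSVfin.mem_toFinset.mpr (ht hx)))
  -- φ : value assignment
  have hφex : ∀ m : ℝ × ℝ, ∃ v : ℝ, m ∈ F → v ∈ V ∧ dist (P m) v < c * δ / 2 := by
    intro m
    by_cases hm : m ∈ F
    · obtain ⟨v, hv, hvd⟩ := hVcov (P m) ⟨m, hm, rfl⟩
      exact ⟨v, fun _ => ⟨hv, hvd⟩⟩
    · exact ⟨0, fun h => absurd h hm⟩
  choose φ hφ using hφex
  -- pair set
  set PR : Finset ((ℝ × ℝ) × (ℝ × ℝ)) := (F ×ˢ F).filter (fun p => φ p.1 = φ p.2) with hPR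
  -- pairing into Z
  have hpair : ∀ p ∈ PR, ∃ q ∈ Z, dist p q < δ := by
    intro p hp
    rw [hPR, Finset.mem_filter, Finset.mem_product] at hp
    obtain ⟨⟨hp1, hp2⟩, hpeq⟩ := hp
    obtain ⟨z, hz, hz1⟩ := hFY hp1
    obtain ⟨z', hz', hz2⟩ := hFY hp2
    have hd1 := (hφ p.1 hp1).2
    have hd2 := (hφ p.2 hp2).2
    rw [hpeq] at hd1
    rw [Real.dist_eq] at hd1 hd2
    set w := (P p.1 + P p.2) / 2 with hw
    have hw1 : w ∈ Icc (P (μ z) - c * δ) (P (μ z) + c * δ) := by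
      rw [hz1]
      constructor <;> rw [hw] <;> cases' abs_lt.mp hd1 with h1 h2 <;>
        cases' abs_lt.mp hd2 with h3 h4 <;> linarith
    have hw2 : w ∈ Icc (P (μ z') - c * δ) (P (μ z') + c * δ) := by
      rw [hz2]
      constructor <;> rw [hw] <;> cases' abs_lt.mp hd1 with h1 h2 <;>
        cases' abs_lt.mp hd2 with h3 h4 <;> linarith
    obtain ⟨q1, hq1sq, hq1⟩ := hreach z hz hw1
    obtain ⟨q2, hq2sq, hq2⟩ := hreach z' hz' hw2
    refine ⟨(q1, q2), ⟨hsqX z hz hq1sq, hsqX z' hz' hq2sq, by rw [hq1, hq2]⟩, ?_⟩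
    rw [Prod.dist_eq]
    apply max_lt
    · calc dist p.1 q1 ≤ dist q1 (μ z) := by rw [dist_comm, hz1]
        _ ≤ δ / 2 := hcdist z q1 hq1sq
        _ < δ := by linarith
    · calc dist p.2 q2 ≤ dist q2 (μ z') := by rw [dist_comm, hz2]
        _ ≤ δ / 2 := hcdist z' q2 hq2sq
        _ < δ := by linarith
  -- assign cover elements
  have huex : ∀ p : (ℝ × ℝ) × (ℝ × ℝ), ∃ u, p ∈ PR → u ∈ tZ ∧ dist p u < 2 * δ := by
    intro p
    by_cases hp : p ∈ PR
    · obtain ⟨q, hqZ, hqd⟩ := hpair p hp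
      have := htZcov hqZ
      rw [mem_iUnion₂] at this
      obtain ⟨u, hu, hqu⟩ := this
      rw [Metric.mem_ball] at hqu
      exact ⟨u, fun _ => ⟨hu, by calc dist p u ≤ dist p q + dist q u := dist_triangle _ _ _
        _ < 2 * δ := by linarith⟩⟩
    · exact ⟨p, fun h => absurd h hp⟩
  choose uf huf using huex
  have hinjP : Set.InjOn uf ↑PR := by
    intro p hp p' hp' hpp
    by_contra hne
    have h1 := huf p (by exact_mod_cast hp)
    have h2 := huf p' (by exact_mod_cast hp')
    have hdd : dist p p' < 4 * δ := by
      calc dist p p' ≤ dist p (uf p) + dist (uf p') p' := by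
            rw [hpp]; exact dist_triangle _ _ _
        _ < 4 * δ := by rw [dist_comm (uf p') p']; linarith [h1.2, h2.2]
    have hpPR : p ∈ PR := by exact_mod_cast hp
    have hp'PR : p' ∈ PR := by exact_mod_cast hp'
    rw [hPR, Finset.mem_filter, Finset.mem_product] at hpPR hp'PR
    have hsep : 6 * δ ≤ dist p p' := by
      rcases Prod.mk.injEq p.1 p.2 p'.1 p'.2 ▸ hne with h
      have : p.1 ≠ p'.1 ∨ p.2 ≠ p'.2 := by
        by_contra hcon
        push_neg at hcon
        exact hne (Prod.ext hcon.1 hcon.2)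
      rcases this with h | h
      · calc 6 * δ ≤ dist p.1 p'.1 := hFsep _ hpPR.1.1 _ hp'PR.1.1 h
          _ ≤ dist p p' := by rw [Prod.dist_eq]; exact le_max_left _ _
      · calc 6 * δ ≤ dist p.2 p'.2 := hFsep _ hpPR.1.2 _ hp'PR.1.2 h
          _ ≤ dist p p' := by rw [Prod.dist_eq]; exact le_max_right _ _
    linarith
  have hPcard : PR.card ≤ tZ.card := by
    apply Finset.card_le_card_of_injOn uf (fun p hp => (huf p hp).1) hinjP
  -- fiberwise counting
  have hφV : ∀ m ∈ F, φ m ∈ V := fun m hm => (hφ m hm).1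
  have hFsum : F.card = ∑ v ∈ V, (F.filter (fun m => φ m = v)).card :=
    Finset.card_eq_sum_card_fiberwise hφV
  have hPRsum : PR.card = ∑ v ∈ V, ((F.filter (fun m => φ m = v)).card) ^ 2 := by
    have h1 : PR.card = ∑ v ∈ V, (PR.filter (fun p => φ p.1 = v)).card := by
      apply Finset.card_eq_sum_card_fiberwise
      intro p hp
      simp only [Finset.mem_coe, hPR, Finset.mem_filter, Finset.mem_product] at hp
      exact hφV p.1 hp.1.1
    rw [h1]
    apply Finset.sum_congr rfl
    intro v hv
    have : PR.filter (fun p => φ p.1 = v) =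
        (F.filter (fun m => φ m = v)) ×ˢ (F.filter (fun m => φ m = v)) := by
      ext p
      rw [Finset.mem_filter, hPR, Finset.mem_filter, Finset.mem_product,
        Finset.mem_product, Finset.mem_filter, Finset.mem_filter]
      constructor
      · rintro ⟨⟨⟨h1, h2⟩, h3⟩, h4⟩
        exact ⟨⟨h1, h4⟩, h2, h3 ▸ h4⟩
      · rintro ⟨⟨h1, h4⟩, h2, h3⟩
        exact ⟨⟨⟨h1, h2⟩, h4.trans h3.symm⟩, h4⟩
    rw [this, Finset.card_product, sq]
  -- Cauchy-Schwarz
  have hCS : (F.card : ℝ) ^ 2 ≤ (V.card : ℝ) * (PR.card : ℝ) := by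
    have := sq_sum_le_card_mul_sum_sq (s := V) (f := fun v => ((F.filter (fun m => φ m = v)).card : ℝ))
    rw [hFsum, hPRsum]
    push_cast
    exact this
  -- V' : separated values
  obtain ⟨V', hV'sub, hV'sep, hV'cov⟩ := maxSep (S := ↑V) (r := 4 * (c * δ)) (by linarith) V.card
    (fun t ht _ => Finset.card_le_card (fun x hx => by exact_mod_cast ht hx))
  -- V.card ≤ 17 * V'.card
  have hψex : ∀ v : ℝ, ∃ v' : ℝ, v ∈ V → v' ∈ V' ∧ dist v v' < 4 * (c * δ) := by
    intro v
    by_cases hv : v ∈ V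
    · obtain ⟨v', hv', hd⟩ := hV'cov v (by exact_mod_cast hv)
      exact ⟨v', fun _ => ⟨hv', hd⟩⟩
    · exact ⟨0, fun h => absurd h hv⟩
  choose ψ hψ using hψex
  have hVsum : V.card = ∑ v' ∈ V', (V.filter (fun v => ψ v = v')).card :=
    Finset.card_eq_sum_card_fiberwise (fun v hv => (hψ v hv).1)
  have hfiber17 : ∀ v' ∈ V', (V.filter (fun v => ψ v = v')).card ≤ 17 := by
    intro v' hv'
    have hsub : ↑(V.filter (fun v => ψ v = v')) ⊆ Icc (v' - 4 * (c * δ)) (v' - 4 * (c * δ) + 8 * (c * δ)) := by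
      intro v hv
      rw [Finset.coe_filter] at hv
      obtain ⟨hvV, hvψ⟩ := hv
      have := (hψ v hvV).2
      rw [hvψ, Real.dist_eq, abs_lt] at this
      constructor <;> linarith [this.1, this.2]
    have hsep17 : ∀ p ∈ V.filter (fun v => ψ v = v'), ∀ q ∈ V.filter (fun v => ψ v = v'),
        p ≠ q → c * δ / 2 ≤ dist p q := by
      intro p hp q hq hpq
      exact hVsep p (Finset.mem_filter.mp hp).1 q (Finset.mem_filter.mp hq).1 hpq
    have := sep_interval_card (by linarith : (0:ℝ) < c * δ / 2) (by linarith : (0:ℝ) ≤ 8 * (c * δ))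
      (V.filter (fun v => ψ v = v')) hsub hsep17
    have hfloor : ⌊(8 * (c * δ)) / (c * δ / 2)⌋ = 16 := by
      rw [show (8 * (c * δ)) / (c * δ / 2) = 16 by field_simp; ring]
      norm_num
    rw [hfloor] at this
    simpa using this
  have hV17 : V.card ≤ 17 * V'.card := by
    rw [hVsum]
    calc ∑ v' ∈ V', (V.filter (fun v => ψ v = v')).card ≤ ∑ _v' ∈ V', 17 :=
          Finset.sum_le_sum hfiber17
      _ = 17 * V'.card := by rw [Finset.sum_const]; ring
  -- volume bound : c * V'.card ≤ tM.card
  have hIsub : ∀ v' ∈ V', Icc (v' - c * δ) (v' + c * δ) ⊆ P '' X := by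
    intro v' hv'
    have hv'V : v' ∈ V := by exact_mod_cast hV'sub hv'
    obtain ⟨m, hmF, hmv⟩ := hVS (by exact_mod_cast hv'V)
    obtain ⟨z, hz, hzm⟩ := hFY (by exact_mod_cast hmF)
    refine subset_trans ?_ (subset_trans (hreach z hz) (image_mono (hsqX z hz)))
    have hPμ : P (μ z) = v' := by rw [hzm]; exact hmv
    rw [hPμ]
  have hvolume : (V'.card : ℝ) * (2 * (c * δ)) ≤ (tM.card : ℝ) * (2 * δ) := by
    have hdisj : (↑V' : Set ℝ).PairwiseDisjoint (fun v => Icc (v - c * δ) (v + c * δ)) := by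
      intro v1 hv1 v2 hv2 hne
      simp only [Function.onFun]
      rw [Set.disjoint_left]
      intro x hx1 hx2
      have hsep := hV'sep v1 (by exact_mod_cast hv1) v2 (by exact_mod_cast hv2) hne
      rw [Real.dist_eq] at hsep
      have h1 := hx1.1; have h2 := hx1.2; have h3 := hx2.1; have h4 := hx2.2
      rcases abs_cases (v1 - v2) with ⟨he, _⟩ | ⟨he, _⟩ <;> rw [he] at hsep <;> linarith
    have hmeas : ∀ v' ∈ V', MeasurableSet (Icc (v' - c * δ) (v' + c * δ)) :=
      fun _ _ => measurableSet_Icc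
    have hL : MeasureTheory.volume (⋃ v' ∈ V', Icc (v' - c * δ) (v' + c * δ)) =
        V'.card * ENNReal.ofReal (2 * (c * δ)) := by
      rw [MeasureTheory.measure_biUnion_finset hdisj hmeas]
      have : ∀ v' ∈ V', MeasureTheory.volume (Icc (v' - c * δ) (v' + c * δ)) =
          ENNReal.ofReal (2 * (c * δ)) := by
        intro v' _
        rw [Real.volume_Icc]
        congr 1
        ring
      rw [Finset.sum_congr rfl this, Finset.sum_const, nsmul_eq_mul]
    have hU : MeasureTheory.volume (⋃ v' ∈ V', Icc (v' - c * δ) (v' + c * δ)) ≤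
        tM.card * ENNReal.ofReal (2 * δ) := by
      calc MeasureTheory.volume (⋃ v' ∈ V', Icc (v' - c * δ) (v' + c * δ))
          ≤ MeasureTheory.volume (⋃ u ∈ tM, Metric.ball u δ) := by
            apply MeasureTheory.measure_mono
            apply iUnion₂_subset
            intro v' hv'
            exact subset_trans (hIsub v' hv') htMcov
        _ ≤ ∑ u ∈ tM, MeasureTheory.volume (Metric.ball u δ) :=
            MeasureTheory.measure_biUnion_finset_le _ _
        _ = tM.card * ENNReal.ofReal (2 * δ) := by
            have : ∀ u ∈ tM, MeasureTheory.volume (Metric.ball u δ) = ENNReal.ofReal (2 * δ) := by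
              intro u _
              rw [Real.volume_ball]
            rw [Finset.sum_congr rfl this, Finset.sum_const, nsmul_eq_mul]
    have hEN : (V'.card : ENNReal) * ENNReal.ofReal (2 * (c * δ)) ≤
        (tM.card : ENNReal) * ENNReal.ofReal (2 * δ) := hL ▸ hU
    have := ENNReal.toReal_mono (by finiteness) hEN
    rw [ENNReal.toReal_mul, ENNReal.toReal_mul, ENNReal.toReal_ofReal (by linarith),
      ENNReal.toReal_ofReal (by linarith), ENNReal.toReal_natCast, ENNReal.toReal_natCast] at this
    exact this
  have hcV' : c * (V'.card : ℝ) ≤ (tM.card : ℝ) := by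
    have h2δ : (0:ℝ) < 2 * δ := by linarith
    rw [← mul_le_mul_iff_of_pos_right h2δ]
    calc c * (V'.card : ℝ) * (2 * δ) = (V'.card : ℝ) * (2 * (c * δ)) := by ring
      _ ≤ (tM.card : ℝ) * (2 * δ) := hvolume
  -- E ≥ 1
  have hEpos : (0:ℝ) < (tZ.card : ℝ) := by
    obtain ⟨x₀, hx₀⟩ := Set.nonempty_iff_ne_empty.mpr hXne
    have hxZ : (x₀, x₀) ∈ Z := ⟨hx₀, hx₀, rfl⟩
    have := htZcov hxZ
    rw [mem_iUnion₂] at this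
    obtain ⟨u, hu, _⟩ := this
    have : 0 < tZ.card := Finset.card_pos.mpr ⟨u, hu⟩
    exact_mod_cast this
  -- final computation
  rw [← htZcard, ← htMcard]
  rw [div_le_iff₀ hEpos]
  have hN : (covN δ X : ℝ) ≤ 225 * F.card := by exact_mod_cast hNle
  have hPPR : (PR.card : ℝ) ≤ (tZ.card : ℝ) := by exact_mod_cast hPcard
  have hV17' : (V.card : ℝ) ≤ 17 * V'.card := by exact_mod_cast hV17
  have hNsq : (covN δ X : ℝ) ^ 2 ≤ 50625 * (F.card : ℝ) ^ 2 := by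
    nlinarith [hN, (Nat.cast_nonneg (covN δ X) : (0:ℝ) ≤ (covN δ X : ℝ)),
      (Nat.cast_nonneg F.card : (0:ℝ) ≤ (F.card : ℝ))]
  have hF2 : (F.card : ℝ) ^ 2 ≤ (V.card : ℝ) * (tZ.card : ℝ) := by
    calc (F.card : ℝ) ^ 2 ≤ (V.card : ℝ) * (PR.card : ℝ) := hCS
      _ ≤ (V.card : ℝ) * (tZ.card : ℝ) := by
          apply mul_le_mul_of_nonneg_left hPPR (Nat.cast_nonneg _)
  have hcV : c * (V.card : ℝ) ≤ 17 * (tM.card : ℝ) := by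
    calc c * (V.card : ℝ) ≤ c * (17 * V'.card) := by
          apply mul_le_mul_of_nonneg_left hV17' (le_of_lt hc)
      _ = 17 * (c * V'.card) := by ring
      _ ≤ 17 * (tM.card : ℝ) := by linarith [hcV']
  have hE0 : (0:ℝ) ≤ (tZ.card : ℝ) := le_of_lt hEpos
  have h1 : c * (covN δ X : ℝ) ^ 2 ≤ c * (50625 * (F.card : ℝ) ^ 2) :=
    mul_le_mul_of_nonneg_left hNsq (le_of_lt hc)
  have h2 : c * ((F.card : ℝ) ^ 2) ≤ c * ((V.card : ℝ) * (tZ.card : ℝ)) :=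
    mul_le_mul_of_nonneg_left hF2 (le_of_lt hc)
  have h4 : (c * (V.card : ℝ)) * (tZ.card : ℝ) ≤ (17 * (tM.card : ℝ)) * (tZ.card : ℝ) :=
    mul_le_mul_of_nonneg_right hcV hE0
  nlinarith [h1, h2, h4]
end

section
/- Let p₁ = (t,0), p₂ = (−t,0), p₃ = (a,b) with t ≠ 0, and set φ₃(x,y) = (x−a)² + (y−b)². Then at every point (x,y) with y ≠ 0, the partial derivatives of φ₃ with respect to φ₁ = (x−t)² + y² and φ₂ = (x+t)² + y² (holding the other fixed) are ∂φ₃/∂φ₁ = (−bx + (t+a)y − bt)/(2ty) and ∂φ₃/∂φ₂ = (bx + (t−a)y − bt)/(2ty). In particular, ∂φ₃/∂φ₁ vanishes exactly on the line through p₂ = (−t,0) and p₃ = (a,b), and ∂φ₃/∂φ₂ vanishes exactly on the line through p₁ = (t,0) and p₃ = (a,b). -/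
/-- with `φ₁ = (x−t)² + y²`, `φ₂ = (x+t)² + y²`, `φ₃ = (x−a)² + (y−b)²`,
at every point with `y ≠ 0` the partial derivatives of `φ₃` with respect to `φ₁, φ₂`
(i.e. the unique coefficients `λ, μ` with `∇φ₃ = λ∇φ₁ + μ∇φ₂`) are
`∂φ₃/∂φ₁ = (−bx + (t+a)y − bt)/(2ty)` and `∂φ₃/∂φ₂ = (bx + (t−a)y − bt)/(2ty)`;
the former vanishes exactly on the line through `(−t,0)` and `(a,b)`, the latter exactly
on the line through `(t,0)` and `(a,b)`. -/
theorem pinned_distance_partials (t a b : ℝ) (ht : t ≠ 0) :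
    ∀ x y : ℝ, y ≠ 0 →
      (2 * (x - a) = (-b * x + (t + a) * y - b * t) / (2 * t * y) * (2 * (x - t))
            + (b * x + (t - a) * y - b * t) / (2 * t * y) * (2 * (x + t)) ∧
        2 * (y - b) = (-b * x + (t + a) * y - b * t) / (2 * t * y) * (2 * y)
            + (b * x + (t - a) * y - b * t) / (2 * t * y) * (2 * y)) ∧
      (∀ l m : ℝ,
        (2 * (x - a) = l * (2 * (x - t)) + m * (2 * (x + t)) ∧
          2 * (y - b) = l * (2 * y) + m * (2 * y)) →
        l = (-b * x + (t + a) * y - b * t) / (2 * t * y) ∧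
          m = (b * x + (t - a) * y - b * t) / (2 * t * y)) ∧
      ((-b * x + (t + a) * y - b * t) / (2 * t * y) = 0 ↔ (a + t) * y = b * (x + t)) ∧
      ((b * x + (t - a) * y - b * t) / (2 * t * y) = 0 ↔ (a - t) * y = b * (x - t)) := by
  intro x y hy
  have h2ty : (2 * t * y) ≠ 0 := by
    simp [ht, hy]
  refine ⟨⟨by field_simp; ring, by field_simp; ring⟩, ?_, ?_, ?_⟩
  · rintro l m ⟨h1, h2⟩
    constructor
    · field_simp
      linear_combination (y / 2) * h1 - ((x + t) / 2) * h2
    · field_simp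
      linear_combination ((x - t) / 2) * h2 - (y / 2) * h1
  · rw [div_eq_zero_iff]
    constructor
    · rintro (h | h)
      · linarith
      · exact absurd h h2ty
    · intro h; left; linarith
  · rw [div_eq_zero_iff]
    constructor
    · rintro (h | h)
      · linarith
      · exact absurd h h2ty
    · intro h; left; linarith
end

section
/- Let M be a smooth proper submanifold of ℝ^d with M ∩ [0,1]^d compact. Then there is a constant C > 0 such that for all 0 < δ ≤ s, all κ, η > 0, and all sets A₁, …, A_d ⊆ [0,1] satisfying the non-concentration condition E_δ(A_i ∩ J) ≤ δ^{−η} |J|^κ E_δ(A_i) for every interval J of length at least δ and every index i, one has E_δ(A ∩ N_s(M)) ≤ C δ^{−η} s^κ E_δ(A), where A = A₁ × ⋯ × A_d. -/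
open Set

/-- `M` is a smooth embedded submanifold of codimension `c` of `ℝ^d`: near each of its
points it is a regular level set of a smooth submersion `F : ℝ^d → ℝ^c`. -/
def IsSmoothSubmanifoldOfCodim (d c : ℕ) (M : Set (EuclideanSpace ℝ (Fin d))) : Prop :=
  ∀ p ∈ M, ∃ V : Set (EuclideanSpace ℝ (Fin d)), IsOpen V ∧ p ∈ V ∧
    ∃ F : EuclideanSpace ℝ (Fin d) → EuclideanSpace ℝ (Fin c), ContDiffOn ℝ (⊤ : ℕ∞) F V ∧
      M ∩ V = {x ∈ V | F x = 0} ∧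
      ∀ x ∈ M ∩ V, Function.Surjective (fderiv ℝ F x)

namespace CovAux

variable {X : Type*} [PseudoMetricSpace X]

lemma covN_le_card {δ : ℝ} {S : Set X} {t : Finset X}
    (h : S ⊆ ⋃ x ∈ t, Metric.ball x δ) : covN δ S ≤ t.card :=
  Nat.sInf_le ⟨t, rfl, h⟩

lemma exists_cover [ProperSpace X] {δ : ℝ} (hδ : 0 < δ) {S : Set X}
    (hS : Bornology.IsBounded S) :
    ∃ t : Finset X, t.card = covN δ S ∧ S ⊆ ⋃ x ∈ t, Metric.ball x δ := by
  have htb : TotallyBounded S :=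
    (hS.isCompact_closure.totallyBounded).subset subset_closure
  obtain ⟨u, hufin, hucov⟩ := Metric.totallyBounded_iff.1 htb δ hδ
  have hne : {n : ℕ | ∃ t : Finset X, t.card = n ∧ S ⊆ ⋃ x ∈ t, Metric.ball x δ}.Nonempty := by
    refine ⟨hufin.toFinset.card, hufin.toFinset, rfl, ?_⟩
    simpa [Set.Finite.mem_toFinset] using hucov
  obtain ⟨t, ht, hcov⟩ := Nat.sInf_mem hne
  exact ⟨t, ht, hcov⟩

lemma covN_mono [ProperSpace X] {δ : ℝ} (hδ : 0 < δ) {S T : Set X}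
    (hST : S ⊆ T) (hT : Bornology.IsBounded T) : covN δ S ≤ covN δ T := by
  obtain ⟨t, ht, hcov⟩ := exists_cover hδ hT
  exact ht ▸ covN_le_card (hST.trans hcov)

lemma one_le_covN [ProperSpace X] {δ : ℝ} (hδ : 0 < δ) {S : Set X}
    (hS : Bornology.IsBounded S) (hne : S.Nonempty) : 1 ≤ covN δ S := by
  rcases Nat.eq_zero_or_pos (covN δ S) with h0 | h
  · obtain ⟨t, ht, hcov⟩ := exists_cover hδ hS
    rw [h0, Finset.card_eq_zero] at ht
    subst ht
    simp only [Finset.notMem_empty, Set.iUnion_of_empty, Set.iUnion_empty,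
      Set.subset_empty_iff] at hcov
    exact absurd (hcov ▸ hne) (by simp)
  · exact h

lemma covN_biUnion_le [ProperSpace X] {δ : ℝ} (hδ : 0 < δ) {ι : Type*} (t : Finset ι)
    (f : ι → Set X) (hb : ∀ i ∈ t, Bornology.IsBounded (f i)) :
    covN δ (⋃ i ∈ t, f i) ≤ ∑ i ∈ t, covN δ (f i) := by
  classical
  choose u hu hcov using fun (i : ι) (hi : i ∈ t) => exists_cover hδ (hb i hi)
  refine le_trans (covN_le_card (t := t.attach.biUnion (fun i => u i.1 i.2)) ?_)
    ((Finset.card_biUnion_le).trans ?_)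
  · intro x hx
    simp only [Set.mem_iUnion] at hx
    obtain ⟨i, hi, hxi⟩ := hx
    have := hcov i hi hxi
    simp only [Set.mem_iUnion] at this ⊢
    obtain ⟨y, hy, hxy⟩ := this
    exact ⟨y, by simp only [Finset.mem_biUnion]; exact ⟨⟨i, hi⟩, Finset.mem_attach _ _, hy⟩, hxy⟩
  · rw [← Finset.sum_attach t (fun i => covN δ (f i))]
    exact Finset.sum_le_sum (fun i _ => le_of_eq (hu i.1 i.2))

end CovAux

namespace CovAux

abbrev Euc (d : ℕ) := EuclideanSpace ℝ (Fin d)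

lemma coord_dist_le {d : ℕ} (x y : Euc d) (j : Fin d) : |x j - y j| ≤ dist x y := by
  rw [EuclideanSpace.dist_eq]
  have h1 : dist (x j) (y j) ^ 2 ≤ ∑ i, dist (x i) (y i) ^ 2 :=
    Finset.single_le_sum (f := fun i => dist (x i) (y i) ^ 2)
      (fun i _ => sq_nonneg _) (Finset.mem_univ j)
  calc |x j - y j| = dist (x j) (y j) := (Real.dist_eq _ _).symm
    _ = Real.sqrt (dist (x j) (y j) ^ 2) := (Real.sqrt_sq dist_nonneg).symm
    _ ≤ _ := Real.sqrt_le_sqrt h1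

/-- Any ball of radius `ρ * δ` in `Euc d` can be covered by a bounded number
(independent of `δ`) of balls of radius `δ`. -/
lemma cover_ball (d : ℕ) (ρ : ℝ) (hρ : 0 < ρ) :
    ∃ K : ℕ, 0 < K ∧ ∀ (δ : ℝ), 0 < δ → ∀ c : Euc d,
      ∃ t : Finset (Euc d), t.card ≤ K ∧
        Metric.ball c (ρ * δ) ⊆ ⋃ x ∈ t, Metric.ball x δ := by
  classical
  set N : ℤ := ⌈ρ * (d + 1)⌉ + 1 with hN
  have hN1 : (1 : ℤ) ≤ N := by
    have : (0 : ℤ) ≤ ⌈ρ * (d + 1)⌉ := by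
      apply Int.ceil_nonneg
      positivity
    omega
  refine ⟨((2 * N + 1).toNat) ^ d, pow_pos (by omega) d, ?_⟩
  intro δ hδ c
  set h : ℝ := δ / (d + 1) with hh
  have hd1 : (0 : ℝ) < (d : ℝ) + 1 := by positivity
  have hhpos : 0 < h := by positivity
  set T : Finset (Euc d) := (Fintype.piFinset (fun _ : Fin d => Finset.Icc (-N) N)).image
      (fun g : Fin d → ℤ => (WithLp.toLp 2 (fun j => c j + g j * h : Fin d → ℝ) : Euc d)) with hT
  refine ⟨T, ?_, ?_⟩
  · have step1 : T.card ≤ (Fintype.piFinset (fun _ : Fin d => Finset.Icc (-N) N)).card := by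
      rw [hT]; exact Finset.card_image_le
    have step2 : (Fintype.piFinset (fun _ : Fin d => Finset.Icc (-N) N)).card
        = ((2 * N + 1).toNat) ^ d := by
      rw [Fintype.card_piFinset]
      rw [Finset.prod_const, Finset.card_univ, Fintype.card_fin, Int.card_Icc]
      congr 2
      omega
    omega
  · intro y hy
    rw [Metric.mem_ball] at hy
    set g : Fin d → ℤ := fun j => ⌊(y j - c j) / h⌋ with hg
    have hcoord : ∀ j, |y j - c j| ≤ dist y c := fun j => coord_dist_le y c j
    have hrange : ∀ j, g j ∈ Finset.Icc (-N) N := by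
      intro j
      have h1 : |y j - c j| < ρ * δ := lt_of_le_of_lt (hcoord j) hy
      have h2 : (g j : ℝ) ≤ (y j - c j) / h := Int.floor_le _
      have h3 : (y j - c j) / h - 1 < g j := Int.sub_one_lt_floor _
      have h4 : (y j - c j) / h ≤ ρ * (d + 1) := by
        rw [div_le_iff₀ hhpos]
        have : ρ * (d+1) * h = ρ * δ := by rw [hh]; field_simp
        rw [this]
        exact le_trans (le_abs_self _) h1.le
      have h5 : -(ρ * (d + 1)) ≤ (y j - c j) / h := by
        rw [le_div_iff₀ hhpos]
        have : -(ρ * (d+1)) * h = -(ρ * δ) := by rw [hh]; field_simp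
        rw [this]
        have := abs_lt.1 h1
        linarith [this.1]
      simp only [Finset.mem_Icc]
      constructor
      · have : ((-N : ℤ) : ℝ) ≤ (g j : ℝ) := by
          push_cast [hN]
          have hc := Int.le_ceil (ρ * ((d : ℝ) + 1))
          linarith
        exact_mod_cast this
      · have : ((g j : ℤ) : ℝ) ≤ ((N : ℤ) : ℝ) := by
          push_cast [hN]
          have hc := Int.le_ceil (ρ * ((d : ℝ) + 1))
          linarith
        exact_mod_cast this
    have hmem : (WithLp.toLp 2 (fun j => c j + g j * h : Fin d → ℝ) : Euc d) ∈ T := by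
      rw [hT]
      rw [Finset.mem_image]
      exact ⟨g, Fintype.mem_piFinset.2 hrange, rfl⟩
    refine Set.mem_iUnion₂.2 ⟨_, hmem, ?_⟩
    rw [Metric.mem_ball, EuclideanSpace.dist_eq]
    have hterm : ∀ j : Fin d, dist (y j) ((fun j => c j + g j * h : Fin d → ℝ) j) ^ 2 ≤ h ^ 2 := by
      intro j
      have h2 : (g j : ℝ) * h ≤ y j - c j := by
        rw [← le_div_iff₀ hhpos] at *
        · exact Int.floor_le _
      have h3 : y j - c j < (g j + 1) * h := by
        have := Int.lt_floor_add_one ((y j - c j) / h)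
        calc y j - c j = (y j - c j) / h * h := by field_simp
          _ < ((g j : ℝ) + 1) * h := by
              apply mul_lt_mul_of_pos_right _ hhpos
              exact_mod_cast this
      rw [Real.dist_eq, sq_abs]
      have : |y j - (c j + g j * h)| ≤ h := by
        rw [abs_le]; constructor <;> nlinarith
      calc (y j - (c j + g j * h)) ^ 2 = |y j - (c j + g j * h)| ^ 2 := (sq_abs _).symm
        _ ≤ h ^ 2 := by nlinarith [abs_nonneg (y j - (c j + g j * h))]
    have hsum : ∑ j, dist (y j) ((fun j => c j + g j * h : Fin d → ℝ) j) ^ 2 ≤ d * h ^ 2 := by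
      calc _ ≤ ∑ _j : Fin d, h ^ 2 := Finset.sum_le_sum (fun j _ => hterm j)
        _ = d * h ^ 2 := by simp [mul_comm]
    have hlt : (d : ℝ) * h ^ 2 < δ ^ 2 := by
      have : δ = ((d : ℝ) + 1) * h := by rw [hh]; field_simp
      rw [this]
      have : (d : ℝ) < ((d : ℝ) + 1) ^ 2 := by nlinarith [Nat.cast_nonneg (α := ℝ) d]
      nlinarith
    have := lt_of_le_of_lt hsum hlt
    calc Real.sqrt (∑ j, dist (y j) ((fun j => c j + g j * h : Fin d → ℝ) j) ^ 2)
        < Real.sqrt (δ ^ 2) := Real.sqrt_lt_sqrt (Finset.sum_nonneg (fun j _ => sq_nonneg _)) this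
      _ = δ := Real.sqrt_sq hδ.le

/-- From a cover by `ρδ`-balls to a bound on the `δ`-covering number. -/
lemma covN_le_of_cover_mul (d : ℕ) (ρ : ℝ) (hρ : 0 < ρ) :
    ∃ K : ℕ, 0 < K ∧ ∀ (δ : ℝ), 0 < δ → ∀ (S : Set (Euc d)) (t : Finset (Euc d)),
      S ⊆ (⋃ x ∈ t, Metric.ball x (ρ * δ)) → covN δ S ≤ K * t.card := by
  classical
  obtain ⟨K, hK, hcov⟩ := cover_ball d ρ hρ
  refine ⟨K, hK, ?_⟩
  intro δ hδ S t hS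
  choose u hu hucov using fun c : Euc d => hcov δ hδ c
  refine le_trans (covN_le_card (t := t.biUnion u) ?_) ?_
  · intro x hx
    obtain ⟨c, hc, hxc⟩ := Set.mem_iUnion₂.1 (hS hx)
    have := hucov c hxc
    obtain ⟨z, hz, hxz⟩ := Set.mem_iUnion₂.1 this
    exact Set.mem_iUnion₂.2 ⟨z, Finset.mem_biUnion.2 ⟨c, hc, hz⟩, hxz⟩
  · calc (t.biUnion u).card ≤ ∑ c ∈ t, (u c).card := Finset.card_biUnion_le
      _ ≤ ∑ _c ∈ t, K := Finset.sum_le_sum (fun c _ => hu c)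
      _ = K * t.card := by rw [Finset.sum_const, smul_eq_mul, mul_comm]

end CovAux

namespace CovAux

lemma covN_image_le {X Y : Type*} [PseudoMetricSpace X] [PseudoMetricSpace Y] [ProperSpace X]
    {f : X → Y} (hf : LipschitzWith 1 f) {δ : ℝ} (hδ : 0 < δ) {S : Set X}
    (hS : Bornology.IsBounded S) : covN δ (f '' S) ≤ covN δ S := by
  classical
  obtain ⟨t, ht, hcov⟩ := exists_cover hδ hS
  refine le_trans (covN_le_card (t := t.image f) ?_) (le_trans Finset.card_image_le ht.le)
  rintro _ ⟨x, hx, rfl⟩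
  obtain ⟨c, hc, hxc⟩ := Set.mem_iUnion₂.1 (hcov hx)
  refine Set.mem_iUnion₂.2 ⟨f c, Finset.mem_image_of_mem f hc, ?_⟩
  rw [Metric.mem_ball] at *
  calc dist (f x) (f c) ≤ 1 * dist x c := hf.dist_le_mul x c
    _ < δ := by linarith

lemma lipschitz_coord {d : ℕ} (i : Fin d) : LipschitzWith 1 (fun x : Euc d => x i) := by
  refine LipschitzWith.of_dist_le_mul (fun x y => ?_)
  simp only [NNReal.coe_one, one_mul, Real.dist_eq]
  exact coord_dist_le x y i

lemma bounded_cube {d : ℕ} {S : Set (Euc d)} (hS : ∀ x ∈ S, ∀ i, x i ∈ Icc (0:ℝ) 1) :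
    Bornology.IsBounded S := by
  refine (Metric.isBounded_iff_subset_closedBall 0).2 ⟨(d : ℝ), fun x hx => ?_⟩
  rw [Metric.mem_closedBall, dist_zero_right, EuclideanSpace.norm_eq]
  have h1 : ∑ j, ‖x j‖ ^ 2 ≤ (d : ℝ) := by
    calc ∑ j, ‖x j‖ ^ 2 ≤ ∑ _j : Fin d, 1 := by
          refine Finset.sum_le_sum (fun j _ => ?_)
          have hj := hS x hx j
          rw [Set.mem_Icc] at hj
          rw [Real.norm_eq_abs, abs_of_nonneg hj.1]
          nlinarith [hj.1, hj.2]
      _ = (d : ℝ) := by simp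
  calc Real.sqrt (∑ j, ‖x j‖ ^ 2) ≤ Real.sqrt ((d:ℝ)^2) := by
        apply Real.sqrt_le_sqrt
        have hdd : (d:ℕ) ≤ d ^ 2 := Nat.le_self_pow (by norm_num) d
        have hdd' : (d:ℝ) ≤ (d:ℝ)^2 := by exact_mod_cast hdd
        linarith
    _ = (d : ℝ) := Real.sqrt_sq (Nat.cast_nonneg d)

/-- For each bounded `B ⊆ ℝ` there is a maximal `2δ`-separated finite subset. -/
lemma exists_maximal_separated {δ : ℝ} (hδ : 0 < δ) {B : Set ℝ}
    (hB : Bornology.IsBounded B) :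
    ∃ P : Finset ℝ, ↑P ⊆ B ∧
      (∀ p ∈ P, ∀ q ∈ P, p ≠ q → 2 * δ < |p - q|) ∧
      (∀ a ∈ B, ∃ p ∈ P, |a - p| ≤ 2 * δ) ∧
      covN δ B ≤ 4 * P.card := by
  classical
  obtain ⟨t, ht, hcov⟩ := exists_cover hδ hB
  have hsepcard : ∀ P : Finset ℝ, ↑P ⊆ B →
      (∀ p ∈ P, ∀ q ∈ P, p ≠ q → 2 * δ < |p - q|) → P.card ≤ t.card := by
    intro P hPA hPsep
    have hφ : ∀ p ∈ P, ∃ c ∈ t, p ∈ Metric.ball c δ := by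
      intro p hp
      simpa using Set.mem_iUnion₂.1 (hcov (hPA hp))
    choose φ hφt hφb using hφ
    apply Finset.card_le_card_of_injOn (fun p => if hp : p ∈ P then φ p hp else 0)
    · intro p hp
      simp only [Finset.mem_coe] at hp
      simp only [hp, dif_pos]
      exact hφt p hp
    · intro p hp q hq hpq
      simp only [Finset.mem_coe] at hp hq
      simp only [hp, hq, dif_pos] at hpq
      by_contra hne
      have h1 := hφb p hp
      have h2 := hφb q hq
      rw [hpq] at h1
      rw [Metric.mem_ball, Real.dist_eq] at h1 h2
      have hsep := hPsep p hp q hq hne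
      have habs : |p - q| ≤ |p - φ q hq| + |q - φ q hq| := by
        have heq : p - q = (p - φ q hq) - (q - φ q hq) := by ring
        rw [heq]
        exact abs_sub _ _
      linarith
  set C : Set ℕ := {m | ∃ P : Finset ℝ, ↑P ⊆ B ∧
    (∀ p ∈ P, ∀ q ∈ P, p ≠ q → 2 * δ < |p - q|) ∧ P.card = m} with hC
  have hCne : C.Nonempty := ⟨0, ∅, by simp⟩
  have hCbdd : BddAbove C := by
    refine ⟨t.card, fun m hm => ?_⟩
    obtain ⟨P, h1, h2, h3⟩ := hm
    exact h3 ▸ hsepcard P h1 h2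
  obtain ⟨P, hPA, hPsep, hPcard⟩ := Nat.sSup_mem hCne hCbdd
  have hmax : ∀ a ∈ B, ∃ p ∈ P, |a - p| ≤ 2 * δ := by
    intro a ha
    by_contra hcon
    push_neg at hcon
    have haP : a ∉ P := by
      intro h
      have := hcon a h
      simp only [sub_self, abs_zero] at this
      linarith
    have hmem : P.card + 1 ∈ C := by
      refine ⟨insert a P, ?_, ?_, by rw [Finset.card_insert_of_notMem haP]⟩
      · intro x hx
        rcases Finset.mem_insert.1 hx with rfl | hx
        · exact ha
        · exact hPA hx
      · intro p hp q hq hne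
        rcases Finset.mem_insert.1 hp with hp' | hp' <;>
          rcases Finset.mem_insert.1 hq with hq' | hq'
        · exact absurd (hp'.trans hq'.symm) hne
        · subst hp'; exact hcon q hq'
        · subst hq'; rw [abs_sub_comm]; exact hcon p hp'
        · exact hPsep p hp' q hq' hne
    have := le_csSup hCbdd hmem
    omega
  refine ⟨P, hPA, hPsep, hmax, ?_⟩
  -- cover B by 4 balls per point of P
  have hsub : B ⊆ ⋃ x ∈ P.biUnion (fun p =>
      {p - 9*δ/4, p - 3*δ/4, p + 3*δ/4, p + 9*δ/4}), Metric.ball x δ := by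
    intro a ha
    obtain ⟨p, hp, hap⟩ := hmax a ha
    have habs := abs_le.1 hap
    have : ∃ z ∈ ({p - 9*δ/4, p - 3*δ/4, p + 3*δ/4, p + 9*δ/4} : Finset ℝ), |a - z| < δ := by
      rcases le_or_gt a (p - 3*δ/2) with h1 | h1
      · exact ⟨p - 9*δ/4, by simp, by rw [abs_lt]; constructor <;> linarith [habs.1, habs.2]⟩
      · rcases le_or_gt a p with h2 | h2
        · exact ⟨p - 3*δ/4, by simp, by rw [abs_lt]; constructor <;> linarith⟩
        · rcases le_or_gt a (p + 3*δ/2) with h3 | h3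
          · exact ⟨p + 3*δ/4, by simp, by rw [abs_lt]; constructor <;> linarith⟩
          · exact ⟨p + 9*δ/4, by simp, by rw [abs_lt]; constructor <;> linarith [habs.2]⟩
    obtain ⟨z, hz, haz⟩ := this
    refine Set.mem_iUnion₂.2 ⟨z, Finset.mem_biUnion.2 ⟨p, hp, hz⟩, ?_⟩
    rw [Metric.mem_ball, Real.dist_eq]
    exact haz
  calc covN δ B ≤ (P.biUnion (fun p =>
        ({p - 9*δ/4, p - 3*δ/4, p + 3*δ/4, p + 9*δ/4} : Finset ℝ))).card :=
      covN_le_card hsub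
    _ ≤ ∑ p ∈ P, ({p - 9*δ/4, p - 3*δ/4, p + 3*δ/4, p + 9*δ/4} : Finset ℝ).card :=
      Finset.card_biUnion_le
    _ ≤ ∑ _p ∈ P, 4 := Finset.sum_le_sum (fun p _ => by
        apply le_trans (Finset.card_insert_le _ _)
        apply Nat.succ_le_succ
        apply le_trans (Finset.card_insert_le _ _)
        apply Nat.succ_le_succ
        apply le_trans (Finset.card_insert_le _ _)
        simp)
    _ = 4 * P.card := by rw [Finset.sum_const, smul_eq_mul, mul_comm]

/-- Product lower bound: `∏ covN δ (A i) ≤ 4^d * covN δ A`. -/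
lemma prod_covN_le {d : ℕ} {δ : ℝ} (hδ : 0 < δ) (A : Fin d → Set ℝ)
    (hA : ∀ i, A i ⊆ Icc (0:ℝ) 1) :
    ∏ i, covN δ (A i) ≤ 4 ^ d * covN δ {x : Euc d | ∀ i, x i ∈ A i} := by
  classical
  have hbd : ∀ i, Bornology.IsBounded (A i) :=
    fun i => (Metric.isBounded_Icc (0:ℝ) 1).subset (hA i)
  choose P hPA hPsep _hPmax hPcov using fun i => exists_maximal_separated hδ (hbd i)
  set Q : Finset (Euc d) := (Fintype.piFinset (fun i => P i)).map (WithLp.equiv 2 _).symm.toEmbedding with hQ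
  have hQmem : ∀ x ∈ Q, ∀ i, x i ∈ P i := by
    intro x hx i
    rw [hQ, Finset.mem_map] at hx
    obtain ⟨y, hy, rfl⟩ := hx
    exact Fintype.mem_piFinset.1 hy i
  have hAbd : Bornology.IsBounded {x : Euc d | ∀ i, x i ∈ A i} :=
    bounded_cube (fun x hx i => hA i (hx i))
  obtain ⟨t, ht, hcov⟩ := exists_cover hδ hAbd
  have hQcard : Q.card ≤ t.card := by
    have hφ : ∀ x ∈ Q, ∃ c ∈ t, x ∈ Metric.ball c δ := by
      intro x hx
      have hx' : x ∈ {x : Euc d | ∀ i, x i ∈ A i} :=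
        fun i => hPA i (hQmem x hx i)
      simpa using Set.mem_iUnion₂.1 (hcov hx')
    choose φ hφt hφb using hφ
    apply Finset.card_le_card_of_injOn (fun x => if hx : x ∈ Q then φ x hx else Classical.arbitrary _)
    · intro x hx
      simp only [Finset.mem_coe] at hx
      simp only [hx, dif_pos]
      exact hφt x hx
    · intro x hx y hy hxy
      simp only [Finset.mem_coe] at hx hy
      simp only [hx, hy, dif_pos] at hxy
      by_contra hne
      have hex : ∃ i, x i ≠ y i := by
        by_contra hcon
        push_neg at hcon
        exact hne (PiLp.ext hcon)
      obtain ⟨i, hi⟩ := hex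
      have hsep := hPsep i (x i) (hQmem x hx i) (y i)
        (hQmem y hy i) hi
      have h1 := hφb x hx
      have h2 := hφb y hy
      rw [hxy] at h1
      rw [Metric.mem_ball] at h1 h2
      have hd : dist x y ≤ dist x (φ y hy) + dist y (φ y hy) := dist_triangle_right _ _ _
      have := coord_dist_le x y i
      linarith
  calc ∏ i, covN δ (A i) ≤ ∏ i, 4 * (P i).card := Finset.prod_le_prod' (fun i _ => hPcov i)
    _ = 4 ^ d * ∏ i, (P i).card := by
        rw [Finset.prod_mul_distrib, Finset.prod_const, Finset.card_univ, Fintype.card_fin]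
    _ = 4 ^ d * Q.card := by rw [hQ, Finset.card_map, Fintype.card_piFinset]
    _ ≤ 4 ^ d * t.card := Nat.mul_le_mul_left _ hQcard
    _ = 4 ^ d * covN δ {x : Euc d | ∀ i, x i ∈ A i} := by rw [ht]

end CovAux

namespace CovAux

lemma covN_empty {X : Type*} [PseudoMetricSpace X] (δ : ℝ) : covN δ (∅ : Set X) = 0 :=
  Nat.le_zero.1 (by simpa using covN_le_card (δ := δ) (S := (∅ : Set X)) (t := ∅) (by simp))

/-- Splitting an interval of length `m * s` into `m` pieces of length `s`. -/
lemma covN_inter_Icc_le {δ s η κ : ℝ} (hδ : 0 < δ) (hδs : δ ≤ s)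
    {B : Set ℝ} (hB : B ⊆ Icc (0:ℝ) 1)
    (hyp : ∀ u v : ℝ, δ ≤ v - u →
      (covN δ (B ∩ Icc u v) : ℝ) ≤ δ ^ (-η) * (v - u) ^ κ * (covN δ B : ℝ))
    (u : ℝ) (m : ℕ) (hm : 1 ≤ m) :
    (covN δ (B ∩ Icc u (u + m * s)) : ℝ) ≤ m * (δ ^ (-η) * s ^ κ * (covN δ B : ℝ)) := by
  have hs : 0 < s := lt_of_lt_of_le hδ hδs
  have hBbd : Bornology.IsBounded B := (Metric.isBounded_Icc (0:ℝ) 1).subset hB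
  have hsub : B ∩ Icc u (u + m * s) ⊆
      ⋃ k ∈ Finset.range m, (B ∩ Icc (u + k * s) (u + (k + 1) * s)) := by
    rintro x ⟨hxB, hxI⟩
    rw [Set.mem_Icc] at hxI
    set k0 : ℕ := ⌊(x - u) / s⌋.toNat with hk0
    set k : ℕ := min k0 (m - 1) with hk
    have hxu : 0 ≤ x - u := by linarith [hxI.1]
    have h0 : (0:ℤ) ≤ ⌊(x - u) / s⌋ := Int.floor_nonneg.2 (by positivity)
    have hcast : (k0 : ℝ) = (⌊(x - u) / s⌋ : ℝ) := by
      rw [hk0]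
      have := Int.toNat_of_nonneg h0
      exact_mod_cast congrArg (fun z : ℤ => (z : ℝ)) this
    have hfl : (k0 : ℝ) ≤ (x - u) / s := by rw [hcast]; exact Int.floor_le _
    have hfl2 : (x - u) / s < (k0 : ℝ) + 1 := by rw [hcast]; exact Int.lt_floor_add_one _
    refine Set.mem_iUnion₂.2 ⟨k, Finset.mem_range.2 (by omega), hxB, ?_⟩
    rw [Set.mem_Icc]
    have hks : (k : ℝ) ≤ (x - u) / s :=
      le_trans (by exact_mod_cast Nat.cast_le.2 (min_le_left _ _)) hfl
    rw [le_div_iff₀ hs] at hks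
    constructor
    · linarith
    · rcases le_or_gt k0 (m - 1) with hc | hc
      · have hkk : k = k0 := by omega
        rw [div_lt_iff₀ hs] at hfl2
        rw [hkk]
        push_cast
        linarith
      · have hkk : k = m - 1 := by omega
        have hmk : (k : ℝ) + 1 = m := by
          rw [hkk]
          push_cast [Nat.cast_sub hm]
          ring
        rw [hmk]
        exact hxI.2
  have hpieces : ∀ k, Bornology.IsBounded (B ∩ Icc (u + k * s) (u + (k + 1) * s)) :=
    fun k => hBbd.subset Set.inter_subset_left
  have hmono : covN δ (B ∩ Icc u (u + m * s)) ≤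
      covN δ (⋃ k ∈ Finset.range m, (B ∩ Icc (u + k * s) (u + (k + 1) * s))) := by
    apply covN_mono hδ hsub
    apply Bornology.IsBounded.subset _ (Set.iUnion₂_subset (fun k _ => Set.inter_subset_left))
    exact hBbd
  have hbi := covN_biUnion_le hδ (Finset.range m)
    (fun k => B ∩ Icc (u + k * s) (u + (k + 1) * s)) (fun k _ => hpieces k)
  have hsum : (∑ k ∈ Finset.range m, (covN δ (B ∩ Icc (u + k * s) (u + (k + 1) * s)) : ℝ))
      ≤ m * (δ ^ (-η) * s ^ κ * (covN δ B : ℝ)) := by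
    have hone : ∀ k : ℕ, (covN δ (B ∩ Icc (u + k * s) (u + (k + 1) * s)) : ℝ)
        ≤ δ ^ (-η) * s ^ κ * (covN δ B : ℝ) := by
      intro k
      have := hyp (u + k * s) (u + (k + 1) * s) (by push_cast; linarith)
      have heq : u + ((k : ℝ) + 1) * s - (u + k * s) = s := by ring
      rw [heq] at this
      convert this using 3 <;> push_cast <;> ring
    calc _ ≤ ∑ _k ∈ Finset.range m, δ ^ (-η) * s ^ κ * (covN δ B : ℝ) :=
        Finset.sum_le_sum (fun k _ => hone k)
      _ = m * (δ ^ (-η) * s ^ κ * (covN δ B : ℝ)) := by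
          rw [Finset.sum_const, Finset.card_range, nsmul_eq_mul]
  calc (covN δ (B ∩ Icc u (u + m * s)) : ℝ)
      ≤ (covN δ (⋃ k ∈ Finset.range m, (B ∩ Icc (u + k * s) (u + (k + 1) * s))) : ℝ) := by
        exact_mod_cast hmono
    _ ≤ (∑ k ∈ Finset.range m, (covN δ (B ∩ Icc (u + k * s) (u + (k + 1) * s)) : ℝ)) := by
        exact_mod_cast hbi
    _ ≤ _ := hsum

end CovAux

namespace CovAux

/-- Core column lemma. -/
lemma column_lemma {d : ℕ} {δ s η κ : ℝ} (hδ : 0 < δ) (hδs : δ ≤ s)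
    (A : Fin d → Set ℝ) (hA : ∀ j, A j ⊆ Icc (0:ℝ) 1)
    (i : Fin d)
    (hyp : ∀ u v : ℝ, δ ≤ v - u →
      (covN δ (A i ∩ Icc u v) : ℝ) ≤ δ ^ (-η) * (v - u) ^ κ * (covN δ (A i) : ℝ))
    (K : ℕ)
    (hK : ∀ (S : Set (Euc d)) (t : Finset (Euc d)),
      S ⊆ (⋃ x ∈ t, Metric.ball x (((d:ℝ) + 1) * δ)) → covN δ S ≤ K * t.card)
    (T : Set (Euc d)) (hT : T ⊆ {x : Euc d | ∀ j, x j ∈ A j})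
    (m : ℕ) (hm : 1 ≤ m)
    (hH : ∀ x ∈ T, ∀ y ∈ T, (∀ j, j ≠ i → |x j - y j| ≤ 2 * δ) →
      |x i - y i| ≤ m * s / 2) :
    (covN δ T : ℝ) ≤ (K : ℝ) * m * (δ ^ (-η) * s ^ κ) * ∏ j, (covN δ (A j) : ℝ) := by
  classical
  have hs : 0 < s := lt_of_lt_of_le hδ hδs
  have hAbd : ∀ j, Bornology.IsBounded (A j) :=
    fun j => (Metric.isBounded_Icc (0:ℝ) 1).subset (hA j)
  have hTbd : Bornology.IsBounded T :=
    bounded_cube (fun x hx j => hA j (hT hx j))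
  choose t ht hcov using fun j => exists_cover hδ (hAbd j)
  set Col : Finset (Fin d → ℝ) :=
    Fintype.piFinset (fun j => if j = i then ({(0:ℝ)} : Finset ℝ) else t j) with hCol
  set Tc : (Fin d → ℝ) → Set (Euc d) :=
    fun c => T ∩ {x | ∀ j, j ≠ i → x j ∈ Metric.ball (c j) δ} with hTc
  have hTsub : T ⊆ ⋃ c ∈ Col, Tc c := by
    intro x hx
    have hch : ∀ j, ∃ z ∈ t j, x j ∈ Metric.ball z δ := by
      intro j
      simpa using Set.mem_iUnion₂.1 (hcov j (hT hx j))
    choose ζ hζt hζb using hch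
    refine Set.mem_iUnion₂.2 ⟨fun j => if j = i then 0 else ζ j, ?_, hx, ?_⟩
    · rw [hCol, Fintype.mem_piFinset]
      intro j
      by_cases hj : j = i <;> simp [hj, hζt j]
    · intro j hj
      simp only [hj, if_neg hj]
      exact hζb j
  -- bound each column
  have hcol_bound : ∀ c : Fin d → ℝ,
      (covN δ (Tc c) : ℝ) ≤ (K : ℝ) * (m * (δ ^ (-η) * s ^ κ * (covN δ (A i) : ℝ))) := by
    intro c
    rcases Set.eq_empty_or_nonempty (Tc c) with hTce | ⟨x0, hx0⟩
    · rw [hTce, covN_empty]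
      have h1 : (0:ℝ) ≤ (covN δ (A i) : ℝ) := Nat.cast_nonneg _
      have h2 : (0:ℝ) < δ ^ (-η) := Real.rpow_pos_of_pos hδ _
      have h3 : (0:ℝ) < s ^ κ := Real.rpow_pos_of_pos hs _
      push_cast
      positivity
    · set u : ℝ := x0 i - m * s / 2 with hu
      have hJ : ∀ x ∈ Tc c, x i ∈ A i ∩ Icc u (u + m * s) := by
        intro x hx
        refine ⟨hT hx.1 i, ?_⟩
        have hcond : ∀ j, j ≠ i → |x j - x0 j| ≤ 2 * δ := by
          intro j hj
          have h1 := hx.2 j hj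
          have h2 := hx0.2 j hj
          rw [Metric.mem_ball, Real.dist_eq] at h1 h2
          have h3 : |x j - x0 j| ≤ |x j - c j| + |x0 j - c j| := by
            have heq : x j - x0 j = (x j - c j) - (x0 j - c j) := by ring
            rw [heq]; exact abs_sub _ _
          linarith
        have hHx := hH x hx.1 x0 hx0.1 hcond
        have habs := abs_le.1 hHx
        rw [Set.mem_Icc, hu]
        constructor
        · linarith [habs.1]
        · linarith [habs.2]
      -- cover A i ∩ J
      have hJbd : Bornology.IsBounded (A i ∩ Icc u (u + m * s)) :=
        (hAbd i).subset Set.inter_subset_left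
      obtain ⟨u', hu', hu'cov⟩ := exists_cover hδ hJbd
      set t' : Finset (Euc d) :=
        u'.image (fun y => (WithLp.toLp 2 (fun j => if j = i then y else c j : Fin d → ℝ) : Euc d)) with ht'
      have hTccov : Tc c ⊆ ⋃ z ∈ t', Metric.ball z (((d:ℝ) + 1) * δ) := by
        intro x hx
        obtain ⟨y, hy, hxy⟩ := by
          simpa using Set.mem_iUnion₂.1 (hu'cov (hJ x hx))
        refine Set.mem_iUnion₂.2 ⟨_, Finset.mem_image_of_mem _ hy, ?_⟩
        rw [Metric.mem_ball, EuclideanSpace.dist_eq]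
        have hterm : ∀ j : Fin d,
            dist (x j) ((fun j => if j = i then y else c j : Fin d → ℝ) j) ^ 2 ≤ δ ^ 2 := by
          intro j
          by_cases hj : j = i
          · rw [hj, show ((fun j => if j = i then y else c j : Fin d → ℝ)) i = y from by simp]
            have hxy' : dist (x i) y < δ := by simpa [Metric.mem_ball] using hxy
            have h0 : (0:ℝ) ≤ dist (x i) y := dist_nonneg
            nlinarith [hxy']
          · rw [show ((fun j => if j = i then y else c j : Fin d → ℝ)) j = c j from by simp [hj]]
            have hxc := hx.2 j hj
            rw [Metric.mem_ball] at hxc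
            have h0 : (0:ℝ) ≤ dist (x j) (c j) := dist_nonneg
            nlinarith [hxc]
        have hsum : ∑ j, dist (x j) ((fun j => if j = i then y else c j : Fin d → ℝ) j) ^ 2
            ≤ (d:ℝ) * δ ^ 2 := by
          calc _ ≤ ∑ _j : Fin d, δ ^ 2 := Finset.sum_le_sum (fun j _ => hterm j)
            _ = (d:ℝ) * δ ^ 2 := by simp [mul_comm]
        have hlt : (d:ℝ) * δ ^ 2 < (((d:ℝ) + 1) * δ) ^ 2 := by nlinarith [Nat.cast_nonneg (α := ℝ) d]
        have hpos : 0 < ((d:ℝ) + 1) * δ := by positivity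
        rw [show ((d:ℝ) + 1) * δ = Real.sqrt ((((d:ℝ) + 1) * δ) ^ 2) from (Real.sqrt_sq hpos.le).symm]
        exact Real.sqrt_lt_sqrt (Finset.sum_nonneg (fun j _ => sq_nonneg _))
          (lt_of_le_of_lt hsum hlt)
      have hKbound : covN δ (Tc c) ≤ K * covN δ (A i ∩ Icc u (u + m * s)) := by
        calc covN δ (Tc c) ≤ K * t'.card := hK _ _ hTccov
          _ ≤ K * u'.card := Nat.mul_le_mul_left _ (by rw [ht']; exact Finset.card_image_le)
          _ = K * covN δ (A i ∩ Icc u (u + m * s)) := by rw [hu']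
      have hsplit := covN_inter_Icc_le hδ hδs (hA i) hyp u m hm
      calc (covN δ (Tc c) : ℝ) ≤ (K : ℝ) * (covN δ (A i ∩ Icc u (u + m * s)) : ℝ) := by
            exact_mod_cast hKbound
        _ ≤ (K : ℝ) * (m * (δ ^ (-η) * s ^ κ * (covN δ (A i) : ℝ))) :=
            mul_le_mul_of_nonneg_left hsplit (Nat.cast_nonneg _)
  -- sum over columns
  have hColcard : Col.card = ∏ j ∈ Finset.univ.erase i, covN δ (A j) := by
    rw [hCol, Fintype.card_piFinset]
    rw [← Finset.prod_erase (Finset.univ) (f := fun j => (if j = i then ({(0:ℝ)} : Finset ℝ) else t j).card) (a := i) (by simp)]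
    apply Finset.prod_congr rfl
    intro j hj
    rw [if_neg (Finset.mem_erase.1 hj).1, ht j]
  have hmain : covN δ T ≤ ∑ c ∈ Col, covN δ (Tc c) := by
    calc covN δ T ≤ covN δ (⋃ c ∈ Col, Tc c) := by
          apply covN_mono hδ hTsub
          exact hTbd.subset (Set.iUnion₂_subset (fun c _ => Set.inter_subset_left))
      _ ≤ ∑ c ∈ Col, covN δ (Tc c) :=
          covN_biUnion_le hδ _ _ (fun c _ => hTbd.subset Set.inter_subset_left)
  have hprod : (∏ j ∈ Finset.univ.erase i, (covN δ (A j) : ℝ)) * (covN δ (A i) : ℝ)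
      = ∏ j, (covN δ (A j) : ℝ) := Finset.prod_erase_mul _ _ (Finset.mem_univ i)
  calc (covN δ T : ℝ) ≤ ∑ c ∈ Col, (covN δ (Tc c) : ℝ) := by exact_mod_cast hmain
    _ ≤ ∑ _c ∈ Col, (K : ℝ) * (m * (δ ^ (-η) * s ^ κ * (covN δ (A i) : ℝ))) :=
        Finset.sum_le_sum (fun c _ => hcol_bound c)
    _ = (Col.card : ℝ) * ((K : ℝ) * (m * (δ ^ (-η) * s ^ κ * (covN δ (A i) : ℝ)))) := by
        rw [Finset.sum_const, nsmul_eq_mul]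
    _ = (K : ℝ) * m * (δ ^ (-η) * s ^ κ) *
        ((∏ j ∈ Finset.univ.erase i, (covN δ (A j) : ℝ)) * (covN δ (A i) : ℝ)) := by
        rw [hColcard]
        push_cast
        ring
    _ = _ := by rw [hprod]

end CovAux

namespace CovAux

set_option maxHeartbeats 1000000 in
lemma graph_local {d cM : ℕ} (hcM : 1 ≤ cM) {M : Set (Euc d)}
    (hM : IsSmoothSubmanifoldOfCodim d cM M) {p : Euc d} (hp : p ∈ M) :
    ∃ (i : Fin d) (r L : ℝ), 0 < r ∧ 0 ≤ L ∧
      ∀ x ∈ M, ∀ y ∈ M, dist x p < 2 * r → dist y p < 2 * r →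
        |x i - y i| ≤ L * Real.sqrt (∑ j ∈ Finset.univ.erase i, (x j - y j) ^ 2) := by
  classical
  obtain ⟨V, hVo, hpV, F, hF, hMV, hsurj⟩ := hM p hp
  have hFd : DifferentiableOn ℝ F V := hF.differentiableOn (by simp)
  have hdiffAt : ∀ x ∈ V, DifferentiableAt ℝ F x :=
    fun x hx => (hFd x hx).differentiableAt (hVo.mem_nhds hx)
  set Dp := fderiv ℝ F p with hDp
  have hsurjp : Function.Surjective Dp := hsurj p ⟨hp, hpV⟩
  have hex : ∃ i : Fin d, Dp (EuclideanSpace.single i 1) ≠ 0 := by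
    by_contra hcon
    push_neg at hcon
    have hD0 : Dp = 0 := by
      apply ContinuousLinearMap.coe_injective
      apply Module.Basis.ext (EuclideanSpace.basisFun (Fin d) ℝ).toBasis
      intro j
      rw [OrthonormalBasis.coe_toBasis, EuclideanSpace.basisFun_apply]
      simpa using hcon j
    obtain ⟨v, hv⟩ := hsurjp (EuclideanSpace.single (⟨0, hcM⟩ : Fin cM) 1)
    rw [hD0] at hv
    have := congrArg norm hv
    simp [EuclideanSpace.norm_single] at this
  obtain ⟨i, hwne⟩ := hex
  set w := Dp (EuclideanSpace.single i 1) with hw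
  set e : Euc d := EuclideanSpace.single i (1:ℝ) with he
  set G : Euc d → ℝ := fun x => (inner ℝ w (F x) : ℝ) with hG
  have hGderiv : ∀ x ∈ V, HasFDerivAt G ((innerSL ℝ w).comp (fderiv ℝ F x)) x :=
    fun x hx => ((innerSL ℝ w).hasFDerivAt).comp x ((hdiffAt x hx).hasFDerivAt)
  set g : Euc d → ℝ := fun x => ((innerSL ℝ w).comp (fderiv ℝ F x)) e with hg
  have hfc : ContinuousOn (fderiv ℝ F) V := hF.continuousOn_fderiv_of_isOpen hVo (by simp)
  have hgc : ContinuousOn g V := by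
    have h1 : Continuous (fun T : Euc d →L[ℝ] Euc cM => (innerSL ℝ w) (T e)) :=
      (innerSL ℝ w).continuous.comp (ContinuousLinearMap.apply ℝ (Euc cM) e).continuous
    exact h1.comp_continuousOn hfc
  set c0 : ℝ := ‖w‖ ^ 2 / 2 with hc0
  have hwpos : 0 < ‖w‖ := norm_pos_iff.2 hwne
  have hc0pos : 0 < c0 := by rw [hc0]; positivity
  have hgp : g p = ‖w‖ ^ 2 := by
    rw [hg]
    simp only [ContinuousLinearMap.coe_comp', Function.comp_apply, innerSL_apply_apply]
    rw [← hDp, ← hw, real_inner_self_eq_norm_sq]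
  set Cb : ℝ := ‖Dp‖ + 1 with hCb
  have hCbpos : 0 < Cb := by positivity
  have h1 : {x | c0 < g x} ∈ nhds p := by
    have hat : ContinuousAt g p := hgc.continuousAt (hVo.mem_nhds hpV)
    have : c0 < g p := by rw [hgp, hc0]; nlinarith
    exact hat.preimage_mem_nhds (Ioi_mem_nhds this)
  have h2 : {x | ‖fderiv ℝ F x‖ < Cb} ∈ nhds p := by
    have hat : ContinuousAt (fun x => ‖fderiv ℝ F x‖) p :=
      (continuous_norm.comp_continuousOn hfc).continuousAt (hVo.mem_nhds hpV)
    have : ‖fderiv ℝ F p‖ < Cb := by rw [hCb, ← hDp]; linarith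
    exact hat.preimage_mem_nhds (Iio_mem_nhds this)
  have h3 : V ∈ nhds p := hVo.mem_nhds hpV
  obtain ⟨r6, hr6pos, hball⟩ := Metric.mem_nhds_iff.1
    (Filter.inter_mem h3 (Filter.inter_mem h1 h2))
  set r : ℝ := r6 / 6 with hr
  set L : ℝ := ‖w‖ * Cb / c0 with hL
  have hrpos : 0 < r := by rw [hr]; linarith
  have hLpos : 0 ≤ L := by rw [hL]; positivity
  have hV6 : ∀ z : Euc d, dist z p < 6 * r →
      z ∈ V ∧ c0 < g z ∧ ‖fderiv ℝ F z‖ < Cb := by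
    intro z hz
    have : z ∈ Metric.ball p r6 := by
      rw [Metric.mem_ball]
      rw [hr] at hz
      linarith
    exact hball this
  have hGzero : ∀ x ∈ M, x ∈ V → G x = 0 := by
    intro x hx hxV
    have : x ∈ {x ∈ V | F x = 0} := hMV ▸ ⟨hx, hxV⟩
    rw [hG]
    simp [this.2]
  refine ⟨i, r, L, hrpos, hLpos, ?_⟩
  have hsym : ∀ x y : Euc d, Real.sqrt (∑ j ∈ Finset.univ.erase i, (x j - y j) ^ 2)
      = Real.sqrt (∑ j ∈ Finset.univ.erase i, (y j - x j) ^ 2) := by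
    intro x y
    congr 1
    apply Finset.sum_congr rfl
    intro j _
    ring
  suffices hkey : ∀ x ∈ M, ∀ y ∈ M, dist x p < 2 * r → dist y p < 2 * r → y i ≤ x i →
      x i - y i ≤ L * Real.sqrt (∑ j ∈ Finset.univ.erase i, (x j - y j) ^ 2) by
    intro x hx y hy hxp hyp'
    rcases le_total (y i) (x i) with hc | hc
    · rw [abs_of_nonneg (by linarith)]
      exact hkey x hx y hy hxp hyp' hc
    · rw [abs_of_nonpos (by linarith), hsym]
      have := hkey y hy x hx hyp' hxp hc
      linarith
  intro x hx y hy hxp hyp' hyx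
  set t : ℝ := x i - y i with htdef
  have ht0 : 0 ≤ t := by rw [htdef]; linarith
  rcases eq_or_lt_of_le ht0 with ht | ht
  · rw [← ht]
    positivity
  have hxV : x ∈ V := (hV6 x (by linarith)).1
  have hyV : y ∈ V := (hV6 y (by linarith)).1
  set z : Euc d := y + t • e with hz
  have hze : ∀ j : Fin d, z j = y j + t * (if j = i then 1 else 0) := by
    intro j
    rw [hz]
    rw [PiLp.add_apply, PiLp.smul_apply, he, EuclideanSpace.single_apply]
    simp
  have hzi : z i = x i := by rw [hze i, if_pos rfl, htdef]; ring
  have hzj : ∀ j, j ≠ i → z j = y j := by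
    intro j hj
    rw [hze j, if_neg hj]; ring
  have htxy : t ≤ dist x y := by
    rw [htdef]
    exact le_trans (le_abs_self _) (coord_dist_le x y i)
  have hzp : dist z p < 6 * r := by
    have h1' : dist z y = t := by
      rw [dist_eq_norm, hz]
      simp only [add_sub_cancel_left]
      rw [norm_smul, he, EuclideanSpace.norm_single]
      simp [abs_of_nonneg ht0, abs_of_nonneg (le_of_lt ht)]
    have h2' : dist x y ≤ dist x p + dist y p := dist_triangle_right x y p
    calc dist z p ≤ dist z y + dist y p := dist_triangle z y p
      _ < 6 * r := by rw [h1']; linarith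
  -- mean value: derivative along the segment
  have hseg : ∀ τ : ℝ, 0 ≤ τ → τ ≤ t → dist (y + τ • e) p < 6 * r := by
    intro τ hτ0 hτt
    have h1' : dist (y + τ • e) y = τ := by
      rw [dist_eq_norm]
      simp only [add_sub_cancel_left]
      rw [norm_smul, he, EuclideanSpace.norm_single]
      simp [abs_of_nonneg hτ0]
    have h2' : dist x y ≤ dist x p + dist y p := dist_triangle_right x y p
    calc dist (y + τ • e) p ≤ dist (y + τ • e) y + dist y p := dist_triangle _ y p
      _ < 6 * r := by rw [h1']; linarith
  set ψ : ℝ → ℝ := fun τ => G (y + τ • e) with hψ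
  have hψd : ∀ τ : ℝ, 0 ≤ τ → τ ≤ t → HasDerivAt ψ (g (y + τ • e)) τ := by
    intro τ hτ0 hτt
    have hmem : (y + τ • e) ∈ V := (hV6 _ (hseg τ hτ0 hτt)).1
    have hGd := hGderiv _ hmem
    have hcurve : HasDerivAt (fun τ : ℝ => y + τ • e) e τ := by
      have : HasDerivAt (fun τ : ℝ => τ • e) ((1:ℝ) • e) τ := (hasDerivAt_id τ).smul_const e
      rw [one_smul] at this
      exact this.const_add y
    have := hGd.comp_hasDerivAt τ hcurve
    exact this
  have hψcont : ContinuousOn ψ (Set.Icc 0 t) := by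
    intro τ hτ
    rw [Set.mem_Icc] at hτ
    exact ((hψd τ hτ.1 hτ.2).continuousAt).continuousWithinAt
  obtain ⟨ξ, hξ, hslope⟩ := exists_hasDerivAt_eq_slope ψ (fun τ => g (y + τ • e)) ht hψcont
    (fun τ hτ => hψd τ (le_of_lt hτ.1) (le_of_lt hτ.2))
  have hgξ : c0 < g (y + ξ • e) :=
    (hV6 _ (hseg ξ (le_of_lt hξ.1) (le_of_lt hξ.2))).2.1
  have hψt : ψ t = G z := by rw [hψ]
  have hψ0 : ψ 0 = G y := by rw [hψ]; simp
  have hGy : G y = 0 := hGzero y hy hyV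
  have hGx : G x = 0 := hGzero x hx hxV
  have hGz_lb : c0 * t < G z := by
    have hlt : c0 < (ψ t - ψ 0) / (t - 0) := hslope ▸ hgξ
    rw [hψt, hψ0, hGy, sub_zero, sub_zero] at hlt
    rw [lt_div_iff₀ ht] at hlt
    linarith
  have hmvt1 : ‖G z - G x‖ ≤ (‖w‖ * Cb) * ‖z - x‖ := by
    apply Convex.norm_image_sub_le_of_norm_fderiv_le
      (fun u hu => (hGderiv u (hV6 u (Metric.mem_ball.1 hu)).1).differentiableAt)
      (fun u hu => ?_) (convex_ball p (6 * r))
      (Metric.mem_ball.2 (by linarith : dist x p < 6 * r))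
      (Metric.mem_ball.2 hzp)
    have huV := hV6 u (Metric.mem_ball.1 hu)
    rw [(hGderiv u huV.1).fderiv]
    calc ‖(innerSL ℝ w).comp (fderiv ℝ F u)‖
        ≤ ‖innerSL ℝ w‖ * ‖fderiv ℝ F u‖ := ContinuousLinearMap.opNorm_comp_le _ _
      _ = ‖w‖ * ‖fderiv ℝ F u‖ := by rw [innerSL_apply_norm]
      _ ≤ ‖w‖ * Cb := mul_le_mul_of_nonneg_left huV.2.2.le (norm_nonneg w)
  have hnorm : ‖z - x‖ = Real.sqrt (∑ j ∈ Finset.univ.erase i, (x j - y j) ^ 2) := by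
    rw [EuclideanSpace.norm_eq]
    congr 1
    rw [← Finset.add_sum_erase Finset.univ (fun j => ‖(z - x) j‖ ^ 2) (Finset.mem_univ i)]
    have hzxi : (z - x) i = 0 := by
      rw [PiLp.sub_apply, hzi]; ring
    rw [hzxi]
    rw [norm_zero]
    have h02 : (0:ℝ) ^ 2 = 0 := by norm_num
    rw [h02, zero_add]
    apply Finset.sum_congr rfl
    intro j hj
    have hji : j ≠ i := (Finset.mem_erase.1 hj).1
    rw [PiLp.sub_apply, hzj j hji, Real.norm_eq_abs, sq_abs]
    ring
  have hfinal : c0 * t ≤ ‖w‖ * Cb * ‖z - x‖ := by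
    have h1' : G z - G x = G z := by rw [hGx]; ring
    have h2' : G z ≤ ‖G z - G x‖ := by
      rw [h1', Real.norm_eq_abs]
      exact le_abs_self _
    linarith [hmvt1]
  have hres : t ≤ L * ‖z - x‖ := by
    rw [hL, div_mul_eq_mul_div, le_div_iff₀ hc0pos]
    linarith
  rw [hnorm] at hres
  exact hres
end CovAux

namespace CovAux

lemma covN_union_le {X : Type*} [PseudoMetricSpace X] [ProperSpace X] {δ : ℝ} (hδ : 0 < δ)
    {S T : Set X} (hS : Bornology.IsBounded S) (hT : Bornology.IsBounded T) :
    covN δ (S ∪ T) ≤ covN δ S + covN δ T := by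
  classical
  obtain ⟨t1, ht1, hc1⟩ := exists_cover hδ hS
  obtain ⟨t2, ht2, hc2⟩ := exists_cover hδ hT
  refine le_trans (covN_le_card (t := t1 ∪ t2) ?_) ?_
  · rintro x (hx | hx)
    · obtain ⟨c, hc, hxc⟩ := Set.mem_iUnion₂.1 (hc1 hx)
      exact Set.mem_iUnion₂.2 ⟨c, Finset.mem_union_left _ hc, hxc⟩
    · obtain ⟨c, hc, hxc⟩ := Set.mem_iUnion₂.1 (hc2 hx)
      exact Set.mem_iUnion₂.2 ⟨c, Finset.mem_union_right _ hc, hxc⟩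
  · calc (t1 ∪ t2).card ≤ t1.card + t2.card := Finset.card_union_le _ _
      _ = covN δ S + covN δ T := by rw [ht1, ht2]

end CovAux


set_option maxHeartbeats 1600000

open CovAux

/-- let `M` be a smooth proper submanifold of `ℝ^d` with `M ∩ [0,1]^d`
compact.  Then there is `C > 0` (depending only on `M` and `d`) such that for all
`0 < δ ≤ s`, all `κ, η > 0`, and all sets `A₁, …, A_d ⊆ [0,1]` satisfying
`E_δ(A_i ∩ J) ≤ δ^{−η} |J|^κ E_δ(A_i)` for every interval `J` of length `≥ δ`, one has
`E_δ(A ∩ N_s(M)) ≤ C δ^{−η} s^κ E_δ(A)` where `A = A₁ × ⋯ × A_d`. -/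
theorem covering_of_neighborhood_of_submanifold (d cM : ℕ) (hcM : 1 ≤ cM)
    (M : Set (EuclideanSpace ℝ (Fin d)))
    (hM : IsSmoothSubmanifoldOfCodim d cM M)
    (hMc : IsCompact (M ∩ {x : EuclideanSpace ℝ (Fin d) | ∀ i, x i ∈ Set.Icc (0 : ℝ) 1})) :
    ∃ C : ℝ, 0 < C ∧
      ∀ (δ s κ η : ℝ), 0 < δ → δ ≤ s → 0 < κ → 0 < η →
      ∀ A : Fin d → Set ℝ, (∀ i, A i ⊆ Set.Icc (0 : ℝ) 1) →
        (∀ i, ∀ u v : ℝ, δ ≤ v - u →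
          (covN δ (A i ∩ Set.Icc u v) : ℝ) ≤ δ ^ (-η) * (v - u) ^ κ * (covN δ (A i) : ℝ)) →
        (covN δ ({x : EuclideanSpace ℝ (Fin d) | ∀ i, x i ∈ A i} ∩ Metric.thickening s M) : ℝ)
          ≤ C * δ ^ (-η) * s ^ κ *
              (covN δ {x : EuclideanSpace ℝ (Fin d) | ∀ i, x i ∈ A i} : ℝ) := by
  classical
  obtain ⟨K, hK0, hKall⟩ := covN_le_of_cover_mul d ((d:ℝ) + 1) (by positivity)
  -- charts on the compact part
  choose idx rad Lip hradpos hLnonneg hcone using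
    (fun q : {q : Euc d // q ∈ M} => graph_local hcM hM q.2)
  obtain ⟨chs, hchs⟩ := hMc.elim_finite_subcover
    (fun q : {q : Euc d // q ∈ M} => Metric.ball (q : Euc d) (rad q))
    (fun q => Metric.isOpen_ball)
    (by
      intro x hx
      exact Set.mem_iUnion.2 ⟨⟨x, hx.1⟩, Metric.mem_ball.2 (by simpa using hradpos ⟨x, hx.1⟩)⟩)
  set mq : {q : Euc d // q ∈ M} → ℕ := fun q => 4 + ⌈8 * Lip q * Real.sqrt d⌉₊ with hmq
  have hmq1 : ∀ q, 1 ≤ mq q := fun q => by simp only [hmq]; omega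
  set C : ℝ := (K : ℝ) * ((4 * d : ℝ) + ∑ q ∈ chs, (mq q : ℝ)) * 4 ^ d + 1 with hC
  have hCpos : 0 < C := by
    rw [hC]
    have h1 : (0:ℝ) ≤ (K : ℝ) := Nat.cast_nonneg _
    have h2 : (0:ℝ) ≤ (4 * d : ℝ) + ∑ q ∈ chs, (mq q : ℝ) := by
      apply add_nonneg
      · positivity
      · exact Finset.sum_nonneg (fun q _ => Nat.cast_nonneg _)
    positivity
  refine ⟨C, hCpos, ?_⟩
  intro δ s κ η hδ hδs hκ hη A hA hhyp
  have hs : 0 < s := lt_of_lt_of_le hδ hδs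
  have hrpow1 : (0:ℝ) < δ ^ (-η) := Real.rpow_pos_of_pos hδ _
  have hrpow2 : (0:ℝ) < s ^ κ := Real.rpow_pos_of_pos hs _
  set As : Set (Euc d) := {x : Euc d | ∀ i, x i ∈ A i} with hAs
  have hAsbd : Bornology.IsBounded As := bounded_cube (fun x hx i => hA i (hx i))
  by_cases hAne : ∀ j, (A j).Nonempty
  swap
  · -- some A j empty: everything is empty
    push_neg at hAne
    obtain ⟨j, hj⟩ := hAne
    rw [← Set.not_nonempty_iff_eq_empty] at hj
    rw [Set.not_nonempty_iff_eq_empty] at hj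
    have hAse : As ∩ Metric.thickening s M = ∅ := by
      rw [Set.eq_empty_iff_forall_notMem]
      rintro x ⟨hx1, _⟩
      have := hx1 j
      rw [hj] at this
      exact this
    rw [hAse, covN_empty]
    push_cast
    positivity
  -- main case
  set Slab : Fin d × Bool → Set (Euc d) := fun ib =>
    As ∩ {x : Euc d | x ib.1 ∈ Icc (if ib.2 then 1 - s else 0) ((if ib.2 then 1 - s else 0) + s)}
    with hSlab
  set Piece : {q : Euc d // q ∈ M} → Set (Euc d) := fun q =>
    As ∩ {x : Euc d | ∃ z ∈ M, dist z (q : Euc d) < 2 * rad q ∧ dist x z < s} with hPiece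
  have hdecomp : As ∩ Metric.thickening s M ⊆
      (⋃ ib ∈ (Finset.univ : Finset (Fin d × Bool)), Slab ib) ∪ (⋃ q ∈ chs, Piece q) := by
    rintro x ⟨hxA, hxT⟩
    obtain ⟨z, hzM, hxz⟩ := Metric.mem_thickening_iff.1 hxT
    by_cases hzc : ∀ i, z i ∈ Icc (0:ℝ) 1
    · -- z in the cube: use a chart
      have hzK : z ∈ M ∩ {x : Euc d | ∀ i, x i ∈ Icc (0:ℝ) 1} := ⟨hzM, hzc⟩
      obtain ⟨q, hq, hzq⟩ := Set.mem_iUnion₂.1 (hchs hzK)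
      refine Or.inr (Set.mem_iUnion₂.2 ⟨q, hq, hxA, z, hzM, ?_, hxz⟩)
      rw [Metric.mem_ball] at hzq
      have hr := hradpos q
      linarith
    · -- z outside the cube: slab
      push_neg at hzc
      obtain ⟨i, hzi⟩ := hzc
      rw [Set.mem_Icc] at hzi
      push_neg at hzi
      have hxi := hA i (hxA i)
      rw [Set.mem_Icc] at hxi
      have hco : |x i - z i| ≤ dist x z := coord_dist_le x z i
      have habs := abs_le.1 (le_of_lt (lt_of_le_of_lt hco hxz))
      rcases lt_or_ge (z i) 0 with hz0 | hz0
      · refine Or.inl (Set.mem_iUnion₂.2 ⟨(i, false), Finset.mem_univ _, hxA, ?_⟩)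
        simp only [Bool.false_eq_true, if_false, Set.mem_setOf_eq, Set.mem_Icc]
        constructor
        · linarith [hxi.1]
        · linarith [habs.2]
      · have hz1 : 1 < z i := hzi hz0
        refine Or.inl (Set.mem_iUnion₂.2 ⟨(i, true), Finset.mem_univ _, hxA, ?_⟩)
        simp only [if_true, Set.mem_setOf_eq, Set.mem_Icc]
        constructor
        · linarith [habs.1]
        · linarith [hxi.2]
  -- bounds for each piece via the column lemma
  have hslab_bound : ∀ ib : Fin d × Bool,
      (covN δ (Slab ib) : ℝ) ≤ (K : ℝ) * 2 * (δ ^ (-η) * s ^ κ) * ∏ j, (covN δ (A j) : ℝ) := by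
    intro ib
    apply column_lemma hδ hδs A hA ib.1 (hhyp ib.1) K (hKall δ hδ) _ Set.inter_subset_left 2
      (by norm_num)
    rintro x ⟨hxA, hx⟩ y ⟨hyA, hy⟩ _
    rw [Set.mem_setOf_eq, Set.mem_Icc] at hx hy
    rw [abs_le]
    push_cast
    constructor <;> [linarith [hx.1, hy.2]; linarith [hx.2, hy.1]]
  have hpiece_bound : ∀ q ∈ chs,
      (covN δ (Piece q) : ℝ) ≤ (K : ℝ) * (mq q) * (δ ^ (-η) * s ^ κ) * ∏ j, (covN δ (A j) : ℝ) := by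
    intro q _
    apply column_lemma hδ hδs A hA (idx q) (hhyp (idx q)) K (hKall δ hδ) _ Set.inter_subset_left
      (mq q) (hmq1 q)
    rintro x ⟨hxA, zx, hzxM, hzxq, hxzx⟩ y ⟨hyA, zy, hzyM, hzyq, hyzy⟩ hcol
    -- coordinates of the chart points are close
    have hLq := hLnonneg q
    have hcoord : ∀ j : Fin d, j ≠ idx q → |zx j - zy j| ≤ 4 * s := by
      intro j hj
      have h1 : |zx j - x j| ≤ dist zx x := coord_dist_le zx x j
      have h2 : |y j - zy j| ≤ dist y zy := coord_dist_le y zy j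
      have h3 := hcol j hj
      have h4 : |zx j - zy j| ≤ |zx j - x j| + |x j - y j| + |y j - zy j| := by
        have heq : zx j - zy j = (zx j - x j) + (x j - y j) + (y j - zy j) := by ring
        rw [heq]
        exact le_trans (abs_add_le _ _) (add_le_add_left (abs_add_le _ _) _)
      have h5 : dist zx x < s := by rw [dist_comm]; exact hxzx
      have h6 : dist y zy < s := hyzy
      linarith [abs_nonneg (x j - y j)]
    have hsq : Real.sqrt (∑ j ∈ Finset.univ.erase (idx q), (zx j - zy j) ^ 2)
        ≤ 4 * s * Real.sqrt d := by
      have hsum : ∑ j ∈ Finset.univ.erase (idx q), (zx j - zy j) ^ 2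
          ≤ (4 * s * Real.sqrt d) ^ 2 := by
        have hd2 : (4 * s * Real.sqrt d) ^ 2 = (d : ℝ) * (4 * s) ^ 2 := by
          rw [mul_pow, Real.sq_sqrt (Nat.cast_nonneg d)]
          ring
        rw [hd2]
        calc ∑ j ∈ Finset.univ.erase (idx q), (zx j - zy j) ^ 2
            ≤ ∑ _j ∈ Finset.univ.erase (idx q), (4 * s) ^ 2 := by
              apply Finset.sum_le_sum
              intro j hj
              have := hcoord j (Finset.mem_erase.1 hj).1
              nlinarith [abs_nonneg (zx j - zy j), sq_abs (zx j - zy j),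
                abs_le.1 this]
          _ = ((Finset.univ.erase (idx q)).card : ℝ) * (4 * s) ^ 2 := by
              rw [Finset.sum_const, nsmul_eq_mul]
          _ ≤ (d : ℝ) * (4 * s) ^ 2 := by
              apply mul_le_mul_of_nonneg_right _ (by positivity)
              have : (Finset.univ.erase (idx q)).card ≤ d := by
                calc _ ≤ (Finset.univ : Finset (Fin d)).card := Finset.card_erase_le ..
                  _ = d := by simp
              exact_mod_cast this
      calc Real.sqrt (∑ j ∈ Finset.univ.erase (idx q), (zx j - zy j) ^ 2)
          ≤ Real.sqrt ((4 * s * Real.sqrt d) ^ 2) := Real.sqrt_le_sqrt hsum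
        _ = 4 * s * Real.sqrt d := Real.sqrt_sq (by positivity)
    have hcone' := hcone q zx hzxM zy hzyM hzxq hzyq
    have hzz : |zx (idx q) - zy (idx q)| ≤ Lip q * (4 * s * Real.sqrt d) :=
      le_trans hcone' (mul_le_mul_of_nonneg_left hsq (hLnonneg q))
    have h1 : |x (idx q) - zx (idx q)| ≤ dist x zx := coord_dist_le x zx (idx q)
    have h2 : |zy (idx q) - y (idx q)| ≤ dist zy y := coord_dist_le zy y (idx q)
    have h4 : |x (idx q) - y (idx q)| ≤
        |x (idx q) - zx (idx q)| + |zx (idx q) - zy (idx q)| + |zy (idx q) - y (idx q)| := by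
      have heq : x (idx q) - y (idx q)
          = (x (idx q) - zx (idx q)) + (zx (idx q) - zy (idx q)) + (zy (idx q) - y (idx q)) := by
        ring
      rw [heq]
      exact le_trans (abs_add_le _ _) (add_le_add_left (abs_add_le _ _) _)
    have h5 : dist zy y < s := by rw [dist_comm]; exact hyzy
    have hmge : 8 * Lip q * Real.sqrt d ≤ (⌈8 * Lip q * Real.sqrt d⌉₊ : ℝ) := Nat.le_ceil _
    have hmq' : ((mq q : ℕ) : ℝ) = 4 + (⌈8 * Lip q * Real.sqrt d⌉₊ : ℝ) := by
      rw [hmq]; push_cast; ring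
    have hgoal : (2 : ℝ) * s + Lip q * (4 * s * Real.sqrt d) ≤ (mq q : ℝ) * s / 2 := by
      rw [hmq']
      have hstep := mul_le_mul_of_nonneg_right hmge hs.le
      have hexp : 8 * Lip q * Real.sqrt d * s = 2 * (Lip q * (4 * s * Real.sqrt d)) := by ring
      rw [hexp] at hstep
      linarith
    calc |x (idx q) - y (idx q)| ≤ dist x zx + Lip q * (4 * s * Real.sqrt d) + dist zy y := by
          linarith
      _ ≤ (mq q : ℝ) * s / 2 := by linarith [hxzx, h5]
  -- combine
  have hLHS : (covN δ (As ∩ Metric.thickening s M) : ℝ)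
      ≤ (∑ ib ∈ (Finset.univ : Finset (Fin d × Bool)), (covN δ (Slab ib) : ℝ))
        + (∑ q ∈ chs, (covN δ (Piece q) : ℝ)) := by
    have hU1bd : Bornology.IsBounded (⋃ ib ∈ (Finset.univ : Finset (Fin d × Bool)), Slab ib) :=
      hAsbd.subset (Set.iUnion₂_subset (fun ib _ => Set.inter_subset_left))
    have hU2bd : Bornology.IsBounded (⋃ q ∈ chs, Piece q) :=
      hAsbd.subset (Set.iUnion₂_subset (fun q _ => Set.inter_subset_left))
    have hmono : covN δ (As ∩ Metric.thickening s M) ≤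
        covN δ ((⋃ ib ∈ (Finset.univ : Finset (Fin d × Bool)), Slab ib) ∪ (⋃ q ∈ chs, Piece q)) :=
      covN_mono hδ hdecomp (hU1bd.union hU2bd)
    have hun := covN_union_le hδ hU1bd hU2bd
    have hb1 := covN_biUnion_le hδ (Finset.univ : Finset (Fin d × Bool)) Slab
      (fun ib _ => hAsbd.subset Set.inter_subset_left)
    have hb2 := covN_biUnion_le hδ chs Piece (fun q _ => hAsbd.subset Set.inter_subset_left)
    have : covN δ (As ∩ Metric.thickening s M) ≤
        (∑ ib ∈ (Finset.univ : Finset (Fin d × Bool)), covN δ (Slab ib))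
          + (∑ q ∈ chs, covN δ (Piece q)) := by
      omega
    exact_mod_cast this
  have hprodle : (∏ j, (covN δ (A j) : ℝ)) ≤ (4:ℝ) ^ d * (covN δ As : ℝ) := by
    have := prod_covN_le hδ A hA
    have hcast : ((∏ j, covN δ (A j) : ℕ) : ℝ) ≤ ((4 ^ d * covN δ As : ℕ) : ℝ) := by
      exact_mod_cast this
    push_cast at hcast
    convert hcast using 2
  have hsum_bound : (∑ ib ∈ (Finset.univ : Finset (Fin d × Bool)), (covN δ (Slab ib) : ℝ))
        + (∑ q ∈ chs, (covN δ (Piece q) : ℝ))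
      ≤ (K : ℝ) * ((4 * d : ℝ) + ∑ q ∈ chs, (mq q : ℝ)) * (δ ^ (-η) * s ^ κ)
          * ∏ j, (covN δ (A j) : ℝ) := by
    have hcard : ((Finset.univ : Finset (Fin d × Bool)).card : ℝ) = 2 * d := by
      simp [Finset.card_univ]
      ring
    have h1 : (∑ ib ∈ (Finset.univ : Finset (Fin d × Bool)), (covN δ (Slab ib) : ℝ))
        ≤ (2 * d : ℝ) * ((K : ℝ) * 2 * (δ ^ (-η) * s ^ κ) * ∏ j, (covN δ (A j) : ℝ)) := by
      calc _ ≤ ∑ _ib ∈ (Finset.univ : Finset (Fin d × Bool)),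
            (K : ℝ) * 2 * (δ ^ (-η) * s ^ κ) * ∏ j, (covN δ (A j) : ℝ) :=
          Finset.sum_le_sum (fun ib _ => hslab_bound ib)
        _ = _ := by rw [Finset.sum_const, nsmul_eq_mul, hcard]
    have h2 : (∑ q ∈ chs, (covN δ (Piece q) : ℝ))
        ≤ (∑ q ∈ chs, (mq q : ℝ)) * ((K : ℝ) * (δ ^ (-η) * s ^ κ) * ∏ j, (covN δ (A j) : ℝ)) := by
      have hterm : ∀ q : {q : Euc d // q ∈ M},
          (K : ℝ) * (mq q) * (δ ^ (-η) * s ^ κ) * ∏ j, (covN δ (A j) : ℝ)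
            = (mq q : ℝ) * ((K : ℝ) * (δ ^ (-η) * s ^ κ) * ∏ j, (covN δ (A j) : ℝ)) :=
        fun q => by ring
      calc _ ≤ ∑ q ∈ chs, (K : ℝ) * (mq q) * (δ ^ (-η) * s ^ κ) * ∏ j, (covN δ (A j) : ℝ) :=
          Finset.sum_le_sum hpiece_bound
        _ = ∑ q ∈ chs, (mq q : ℝ) * ((K : ℝ) * (δ ^ (-η) * s ^ κ) * ∏ j, (covN δ (A j) : ℝ)) :=
          Finset.sum_congr rfl (fun q _ => hterm q)
        _ = _ := by rw [Finset.sum_mul]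
    calc _ ≤ (2 * d : ℝ) * ((K : ℝ) * 2 * (δ ^ (-η) * s ^ κ) * ∏ j, (covN δ (A j) : ℝ))
          + (∑ q ∈ chs, (mq q : ℝ)) * ((K : ℝ) * (δ ^ (-η) * s ^ κ) * ∏ j, (covN δ (A j) : ℝ)) :=
        add_le_add h1 h2
      _ = _ := by ring
  have hprodnn : (0:ℝ) ≤ ∏ j, (covN δ (A j) : ℝ) :=
    Finset.prod_nonneg (fun j _ => Nat.cast_nonneg _)
  have hKnn : (0:ℝ) ≤ (K : ℝ) * ((4 * d : ℝ) + ∑ q ∈ chs, (mq q : ℝ)) := by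
    apply mul_nonneg (Nat.cast_nonneg _)
    apply add_nonneg (by positivity) (Finset.sum_nonneg (fun q _ => Nat.cast_nonneg _))
  calc (covN δ (As ∩ Metric.thickening s M) : ℝ)
      ≤ (K : ℝ) * ((4 * d : ℝ) + ∑ q ∈ chs, (mq q : ℝ)) * (δ ^ (-η) * s ^ κ)
          * ∏ j, (covN δ (A j) : ℝ) := le_trans hLHS hsum_bound
    _ ≤ (K : ℝ) * ((4 * d : ℝ) + ∑ q ∈ chs, (mq q : ℝ)) * (δ ^ (-η) * s ^ κ)
          * ((4:ℝ) ^ d * (covN δ As : ℝ)) := by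
        exact mul_le_mul_of_nonneg_left hprodle
          (mul_nonneg hKnn (mul_nonneg hrpow1.le hrpow2.le))
    _ = ((K : ℝ) * ((4 * d : ℝ) + ∑ q ∈ chs, (mq q : ℝ)) * 4 ^ d) * δ ^ (-η) * s ^ κ
          * (covN δ As : ℝ) := by ring
    _ ≤ C * δ ^ (-η) * s ^ κ * (covN δ As : ℝ) := by
        apply mul_le_mul_of_nonneg_right _ (Nat.cast_nonneg _)
        apply mul_le_mul_of_nonneg_right _ hrpow2.le
        apply mul_le_mul_of_nonneg_right _ hrpow1.le
        rw [hC]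
        linarith
end
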